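/- arXiv:2601.18370 — 5 statements merged into one kernel-verified Lean document; each statement's English description precedes it below -/
import Mathlib

section
/- In the semidirect-product setup G = F ⋊ ⟨τ⟩ with subsets X2, X4 ⊆ G built from an ordering A_0, ..., A_{l−1} of the F_q-hyperplanes of F such that S = ⋃_{i=0}^{l−1}(F\A_i)τ^i is inverse-closed in G, the set D = X2 ∪ X4 = S is a reversible identity-free divisible difference set in G relative to the subgroup F with parameters m = l = (q^r−1)/(q−1), n = q^r, k = q^{r−1}(q^r−1), λ1 = q^{r−1}(q^r−q^{r−1}−1), λ2 = q^{r−2}(q−1)(q^r−1); equivalently, Cay(G, X2 ∪ X4) is a proper divisible design graph with parameters (q^r·l, q^{r−1}(q^r−1), q^{r−1}(q^r−q^{r−1}−1), q^{r−2}(q−1)(q^r−1), l, q^r) whose canonical partition is into the cosets of F in G. -/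
/-!
Every element of `G` is uniquely `ι y * t ^ a` with `a : Fin l`, and
`(ι x * t ^ m) * (ι y * t ^ n) = ι (x + τ ^ m * y) * t ^ (m + n)`. Hence for `g = ι x * t ^ m ≠ 1`
the number of `d ∈ S` with `g * d ∈ S` is `∑ n, #{y | y ∉ A n ∧ x + τ ^ m * y ∉ A (m + n)}`,
and each summand is an inclusion–exclusion count for two hyperplanes, one of them translated.

For `m = 0` the two hyperplanes coincide, so the sum is governed by the number of hyperplanes
through `x ≠ 0`. This number does not depend on `x`, because `Fˣ` permutes the hyperplanes and acts
transitively on `F \ {0}`; double counting then gives `(q ^ (r - 1) - 1) / (q - 1)`.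
For `m ≠ 0`, inverse-closedness of `S` says `τ ^ (-n) • A n = A (-n)`, which forces
`τ ^ m • A n ≠ A (m + n)`; two distinct hyperplanes meet in dimension `r - 2`.
-/

open Classical Finset

section TranslateCounts

variable {V : Type*} [AddCommGroup V] [Fintype V]

lemma card_notMem_and_add_notMem (U W : Set V) (x : V) :
    #{y | y ∉ U ∧ x + y ∉ W} + #{y | y ∈ U} + #{y | y ∈ W}
      = Fintype.card V + #{y | y ∈ U ∧ x + y ∈ W} := by
  have htranslate : #{y | x + y ∈ W} = #{y | y ∈ W} :=
    card_nbij' (x + ·) (-x + ·) (by intro y; simp) (by intro y; simp)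
      (by intro y _; simp) (by intro y _; simp)
  have hunion := card_union_add_card_inter ({y | y ∈ U} : Finset V) {y | x + y ∈ W}
  have hcompl := card_filter_add_card_filter_not
    (s := (univ : Finset V)) (fun y => y ∈ U ∨ x + y ∈ W)
  rw [← filter_or, ← filter_and] at hunion
  simp only [not_or, card_univ] at hcompl
  omega

end TranslateCounts

lemma sum_add_card_mul {ι : Type*} [Fintype ι] {f g : ι → ℕ} {c : ℕ} (h : ∀ i, f i + c = g i) :
    ∑ i, f i + Fintype.card ι * c = ∑ i, g i := by
  rw [← sum_congr rfl fun i _ => h i, sum_add_distrib, sum_const, card_univ, smul_eq_mul]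

section FiniteVectorSpace

variable {K V : Type*} [Field K] [AddCommGroup V] [Module K V] [Fintype V]

lemma card_mem_submodule [Fintype K] (U : Submodule K V) :
    #{y | y ∈ U} = Fintype.card K ^ Module.finrank K U := by
  rw [← Module.card_eq_pow_finrank, ← Fintype.card_subtype]

lemma card_mem_and_add_mem_self (U : Submodule K V) (x : V) :
    #{y | y ∈ U ∧ x + y ∈ U} = if x ∈ U then #{y | y ∈ U} else 0 := by
  split_ifs with hx
  · congr 1; ext y
    simp only [mem_filter, mem_univ, true_and, and_iff_left_iff_imp]
    exact U.add_mem hx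
  · rw [card_eq_zero, filter_eq_empty_iff]
    rintro y - ⟨hy, hxy⟩
    exact hx (by simpa using U.sub_mem hxy hy)

lemma sup_eq_top_of_ne {r : ℕ} (hV : Module.finrank K V = r)
    {U W : Submodule K V} (hU : Module.finrank K U = r - 1) (hW : Module.finrank K W = r - 1)
    (hUW : U ≠ W) : U ⊔ W = ⊤ := by
  have hlt : U < U ⊔ W := lt_of_le_of_ne le_sup_left fun h =>
    hUW (Submodule.eq_of_le_of_finrank_eq (h ▸ le_sup_right) (by rw [hU, hW])).symm
  have := Submodule.finrank_lt_finrank_of_lt hlt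
  have := Submodule.finrank_le (U ⊔ W)
  exact Submodule.eq_top_of_finrank_eq (by omega)

lemma card_mem_and_add_mem_of_ne [Fintype K] {r : ℕ} (hV : Module.finrank K V = r)
    {U W : Submodule K V} (hU : Module.finrank K U = r - 1) (hW : Module.finrank K W = r - 1)
    (hUW : U ≠ W) (x : V) :
    #{y | y ∈ U ∧ x + y ∈ W} = Fintype.card K ^ (r - 2) := by
  have hsup := sup_eq_top_of_ne hV hU hW hUW
  have hinf : Module.finrank K ↥(U ⊓ W) = r - 2 := by
    have := Submodule.finrank_sup_add_finrank_inf_eq U W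
    rw [hsup, finrank_top, hV, hU, hW] at this
    omega
  obtain ⟨u, hu, w, hw, rfl⟩ := Submodule.mem_sup.mp (hsup ▸ Submodule.mem_top : x ∈ U ⊔ W)
  rw [← hinf, ← card_mem_submodule]
  refine card_nbij' (· + u) (· - u) ?_ ?_ (by intro y _; simp) (by intro y _; simp)
  · intro y hy
    simp only [coe_filter, mem_univ, true_and, Submodule.mem_inf, Set.mem_ofPred] at hy ⊢
    obtain ⟨hyU, hyW⟩ := hy
    refine ⟨U.add_mem hyU hu, ?_⟩
    convert W.sub_mem hyW hw using 1
    abel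
  · intro z hz
    simp only [coe_filter, mem_univ, true_and, Submodule.mem_inf] at hz ⊢
    refine ⟨U.sub_mem hz.1 hu, ?_⟩
    convert W.add_mem hw hz.2 using 1
    abel

lemma card_notMem_and_add_notMem_self [Fintype K] (U : Submodule K V) (x : V) :
    #{y | y ∉ U ∧ x + y ∉ U} + 2 * #{y | y ∈ U}
      = Fintype.card V + if x ∈ U then #{y | y ∈ U} else 0 := by
  have h := card_notMem_and_add_notMem (U : Set V) U x
  simp only [SetLike.mem_coe, card_mem_and_add_mem_self] at h
  omega

lemma card_notMem_and_add_notMem_of_ne [Fintype K] {r : ℕ} (hV : Module.finrank K V = r)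
    {U W : Submodule K V} (hU : Module.finrank K U = r - 1) (hW : Module.finrank K W = r - 1)
    (hUW : U ≠ W) (x : V) :
    #{y | y ∉ U ∧ x + y ∉ W} + 2 * Fintype.card K ^ (r - 1)
      = Fintype.card V + Fintype.card K ^ (r - 2) := by
  have h := card_notMem_and_add_notMem (U : Set V) W x
  simp only [SetLike.mem_coe, card_mem_and_add_mem_of_ne hV hU hW hUW, card_mem_submodule, hU,
    hW] at h
  omega

end FiniteVectorSpace

lemma pow_val_add_of_pow_eq_one {M : Type*} [Monoid M] {x : M} {l : ℕ} [NeZero l]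
    (hx : x ^ l = 1) (a b : Fin l) : x ^ ((a + b : Fin l) : ℕ) = x ^ (a : ℕ) * x ^ (b : ℕ) := by
  rw [Fin.val_add, ← pow_eq_pow_mod _ hx, pow_add]

section HyperplanesOfField

open Pointwise

variable {K F : Type*} [Field K] [Field F] [Algebra K F]

lemma finrank_units_smul (u : Fˣ) (W : Submodule K F) :
    Module.finrank K ↥(u • W) = Module.finrank K W :=
  LinearEquiv.finrank_map_eq (DistribMulAction.toLinearEquiv K F u) W

lemma mem_units_smul_iff {u : Fˣ} {W : Submodule K F} {x : F} :
    x ∈ u • W ↔ u⁻¹ • x ∈ W :=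
  Set.mem_smul_set_iff_inv_smul_mem (a := u) (A := (W : Set F))

variable {l r : ℕ} {A : Fin l → Submodule K F}

lemma card_units_smul_mem (hA : ∀ i, Module.finrank K (A i) = r - 1)
    (hAinj : Function.Injective A)
    (hAall : ∀ W : Submodule K F, Module.finrank K W = r - 1 → ∃ i, A i = W)
    (u : Fˣ) (x : F) : #{i | u • x ∈ A i} = #{i | x ∈ A i} := by
  have hsmul (v : Fˣ) (i : Fin l) : ∃ j, A j = v • A i :=
    hAall _ (by rw [finrank_units_smul, hA])
  choose π hπ using hsmul
  refine card_nbij' (π u⁻¹) (π u) ?_ ?_ ?_ ?_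
  · intro i hi
    simp only [coe_filter, mem_univ, true_and, Set.mem_ofPred] at hi ⊢
    rwa [hπ, mem_units_smul_iff, inv_inv]
  · intro i hi
    simp only [coe_filter, mem_univ, true_and, Set.mem_ofPred] at hi ⊢
    rwa [hπ, mem_units_smul_iff, inv_smul_smul]
  · intro i _
    apply hAinj
    rw [hπ, hπ, smul_inv_smul]
  · intro i _
    apply hAinj
    rw [hπ, hπ, inv_smul_smul]

lemma card_mem_mul_card_sub_one [Fintype K] [Fintype F] (hF : Module.finrank K F = r)
    (hl : l * (Fintype.card K - 1) = Fintype.card K ^ r - 1)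
    (hA : ∀ i, Module.finrank K (A i) = r - 1) (hAinj : Function.Injective A)
    (hAall : ∀ W : Submodule K F, Module.finrank K W = r - 1 → ∃ i, A i = W)
    {x : F} (hx : x ≠ 0) :
    #{i | x ∈ A i} * (Fintype.card K - 1) = Fintype.card K ^ (r - 1) - 1 := by
  set q := Fintype.card K
  set c := #{i | (1 : F) ∈ A i}
  have hconst {z : F} (hz : z ≠ 0) : #{i | z ∈ A i} = c := by
    simpa using card_units_smul_mem hA hAinj hAall (Units.mk0 z hz) 1
  have hcardF : Fintype.card F = q ^ r := by rw [Module.card_eq_pow_finrank (K := K), hF]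
  have hdouble : ∑ z ∈ univ.erase (0 : F), #{i | z ∈ A i}
      = ∑ i, #{z ∈ univ.erase (0 : F) | z ∈ A i} :=
    sum_card_bipartiteAbove_eq_sum_card_bipartiteBelow _
  have hlhs : ∑ z ∈ univ.erase (0 : F), #{i | z ∈ A i} = (q ^ r - 1) * c := by
    rw [sum_congr rfl fun z hz => hconst (ne_of_mem_erase hz), sum_const, smul_eq_mul,
      card_erase_of_mem (mem_univ _), card_univ, hcardF]
  have hrhs : ∑ i, #{z ∈ univ.erase (0 : F) | z ∈ A i} = l * (q ^ (r - 1) - 1) := by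
    rw [sum_congr rfl fun i _ => ?_, sum_const, card_univ, Fintype.card_fin, smul_eq_mul]
    rw [filter_erase, card_erase_of_mem (by simp), card_mem_submodule, hA]
  have hpos : 0 < q ^ r - 1 := by
    have := Fintype.one_lt_card (α := F)
    omega
  refine Nat.eq_of_mul_eq_mul_left hpos ?_
  calc (q ^ r - 1) * (#{i | x ∈ A i} * (q - 1)) = (q ^ r - 1) * c * (q - 1) := by
        rw [hconst hx, mul_assoc]
    _ = l * (q - 1) * (q ^ (r - 1) - 1) := by rw [← hlhs, hdouble, hrhs]; ring
    _ = (q ^ r - 1) * (q ^ (r - 1) - 1) := by rw [hl]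

lemma card_notMem_and_add_units_mul_notMem [Fintype F] (u : Fˣ) (U W : Submodule K F) (x : F) :
    #{y | y ∉ U ∧ x + (u : F) * y ∉ W} = #{z | z ∉ u • U ∧ x + z ∉ W} := by
  refine card_nbij' (u • ·) (u⁻¹ • ·) ?_ ?_ (by intro y _; simp) (by intro y _; simp)
  · intro y hy
    simp only [coe_filter, mem_univ, true_and, Set.mem_ofPred, mem_units_smul_iff,
      inv_smul_smul] at hy ⊢
    rwa [Units.smul_def, smul_eq_mul]
  · intro z hz
    simp only [coe_filter, mem_univ, true_and, Set.mem_ofPred, mem_units_smul_iff] at hz ⊢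
    rwa [← smul_eq_mul, ← Units.smul_def, smul_inv_smul]

lemma sum_card_notMem_and_add_notMem_self [Fintype K] [Fintype F]
    (hA : ∀ i, Module.finrank K (A i) = r - 1) (x : F) :
    ∑ n, #{y | y ∉ A n ∧ x + y ∉ A n} + l * (2 * Fintype.card K ^ (r - 1))
      = l * Fintype.card F + Fintype.card K ^ (r - 1) * #{i | x ∈ A i} := by
  have h (n : Fin l) := card_notMem_and_add_notMem_self (A n) x
  simp only [card_mem_submodule, hA] at h
  have hsum := sum_add_card_mul h
  rw [Fintype.card_fin] at hsum
  rw [hsum]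
  simp [sum_add_distrib, sum_ite, mul_comm]

lemma sum_card_notMem_and_add_notMem_of_ne [Fintype K] [Fintype F] [NeZero l]
    (hF : Module.finrank K F = r) (hA : ∀ i, Module.finrank K (A i) = r - 1) {u : Fˣ} {m : Fin l}
    (hne : ∀ n, u • A n ≠ A (m + n)) (x : F) :
    ∑ n, #{y | y ∉ A n ∧ x + (u : F) * y ∉ A (m + n)} + l * (2 * Fintype.card K ^ (r - 1))
      = l * (Fintype.card F + Fintype.card K ^ (r - 2)) := by
  have h (n : Fin l) := card_notMem_and_add_notMem_of_ne hF
    ((finrank_units_smul u (A n)).trans (hA n)) (hA (m + n)) (hne n) x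
  simp only [← card_notMem_and_add_units_mul_notMem] at h
  have hsum := sum_add_card_mul h
  rw [Fintype.card_fin] at hsum
  simp [hsum]

lemma units_pow_smul_ne [NeZero l] (hAinj : Function.Injective A) {τ : Fˣ} (hτ : τ ^ l = 1)
    (hflip : ∀ a y, y ∈ A a ↔ (τ : F) ^ ((-a : Fin l) : ℕ) * y ∈ A (-a)) {m : Fin l}
    (hm : m ≠ 0) (n : Fin l) : τ ^ (m : ℕ) • A n ≠ A (m + n) := by
  have hsmul (a : Fin l) : τ ^ ((-a : Fin l) : ℕ) • A a = A (-a) := by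
    ext z
    rw [mem_units_smul_iff, hflip, ← Units.val_pow_eq_pow_val, ← smul_eq_mul,
      ← Units.smul_def, smul_inv_smul]
  intro h
  have h' := congrArg (τ ^ ((-(m + n) : Fin l) : ℕ) • ·) h
  simp only [hsmul, smul_smul, ← pow_val_add_of_pow_eq_one hτ, show -(m + n) + m = -n by abel]
    at h'
  exact hm (by simpa using hAinj h')

end HyperplanesOfField

section Coordinates

variable {F G : Type*} [Group G] {ι : F → G} {t : G} {l : ℕ} {S : Set G}

lemma bijective_map_mul_pow [Fintype F] [Fintype G]
    (hdecomp : ∀ g : G, ∃ (x : F) (i : ℕ), i < l ∧ g = ι x * t ^ i)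
    (hcard : Fintype.card G = Fintype.card F * l) :
    Function.Bijective fun p : Fin l × F => ι p.2 * t ^ (p.1 : ℕ) := by
  rw [Fintype.bijective_iff_surjective_and_card]
  refine ⟨fun g => ?_, by simp [hcard, mul_comm]⟩
  obtain ⟨x, i, hi, rfl⟩ := hdecomp g
  exact ⟨(⟨i, hi⟩, x), rfl⟩

lemma natCard_subtype_eq_sum [Fintype F]
    (hbij : Function.Bijective fun p : Fin l × F => ι p.2 * t ^ (p.1 : ℕ)) (P : G → Prop) :
    Nat.card {g // P g} = ∑ a : Fin l, #{y | P (ι y * t ^ (a : ℕ))} := by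
  rw [← Nat.card_congr ((Equiv.ofBijective _ hbij).subtypeEquiv fun _ => Iff.rfl),
    Nat.card_eq_fintype_card, Fintype.card_subtype, card_filter, Fintype.sum_prod_type]
  simp only [card_filter]
  rfl

lemma mem_iff_notMem_of_injective {B : Fin l → Set F}
    (hinj : Function.Injective fun p : Fin l × F => ι p.2 * t ^ (p.1 : ℕ))
    (hS : S = {g | ∃ i : Fin l, ∃ y ∈ (Set.univ \ B i), g = ι y * t ^ (i : ℕ)})
    (a : Fin l) (y : F) : ι y * t ^ (a : ℕ) ∈ S ↔ y ∉ B a := by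
  subst hS
  constructor
  · rintro ⟨i, z, ⟨-, hz⟩, h⟩
    obtain ⟨rfl, rfl⟩ := Prod.ext_iff.mp (@hinj (a, y) (i, z) h)
    exact hz
  · exact fun hy => ⟨a, y, ⟨trivial, hy⟩, rfl⟩

lemma natCard_eq_sum_card_notMem [Fintype F] {B : Fin l → Set F}
    (hbij : Function.Bijective fun p : Fin l × F => ι p.2 * t ^ (p.1 : ℕ))
    (hS : ∀ (a : Fin l) y, ι y * t ^ (a : ℕ) ∈ S ↔ y ∉ B a) :
    Nat.card S = ∑ a, #{y | y ∉ B a} :=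
  (natCard_subtype_eq_sum hbij (· ∈ S)).trans (by simp only [hS])

lemma image_union_setOf_eq_setOf (B : Fin l → Set F) (h0 : 0 < l) :
    ι '' (Set.univ \ B ⟨0, h0⟩)
        ∪ {g | ∃ i : Fin l, (i : ℕ) ≠ 0 ∧ ∃ y ∈ Set.univ \ B i, g = ι y * t ^ (i : ℕ)}
      = {g | ∃ i : Fin l, ∃ y ∈ Set.univ \ B i, g = ι y * t ^ (i : ℕ)} := by
  ext g
  simp only [Set.mem_union, Set.mem_image, Set.mem_ofPred_eq]
  constructor
  · rintro (⟨y, hy, rfl⟩ | ⟨i, -, y, hy, rfl⟩)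
    exacts [⟨⟨0, h0⟩, y, hy, by simp⟩, ⟨i, y, hy, rfl⟩]
  · rintro ⟨i, y, hy, rfl⟩
    by_cases hi : (i : ℕ) = 0
    · obtain rfl : i = ⟨0, h0⟩ := Fin.ext hi
      exact Or.inl ⟨y, hy, by simp⟩
    · exact Or.inr ⟨i, hi, y, hy, rfl⟩

end Coordinates

section SkewProduct

variable {F G : Type*} [Ring F] [Group G] {ι : F → G} {t : G} {τ : F} {S : Set G}

lemma map_zero_of_map_add (hι : ∀ x y, ι (x + y) = ι x * ι y) : ι 0 = 1 := by
  simpa using hι 0 0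

lemma pow_mul_map (hconj : ∀ x, t * ι x * t⁻¹ = ι (τ * x)) (n : ℕ) (z : F) :
    t ^ n * ι z = ι (τ ^ n * z) * t ^ n := by
  induction n generalizing z with
  | zero => simp
  | succ n ih =>
    calc t ^ (n + 1) * ι z = t ^ n * (t * ι z * t⁻¹) * t := by group
      _ = ι (τ ^ (n + 1) * z) * t ^ (n + 1) := by
        rw [hconj, ih, pow_succ, pow_succ, mul_assoc, mul_assoc]

lemma pow_eq_one_of_conj (hinj : Function.Injective ι) (hconj : ∀ x, t * ι x * t⁻¹ = ι (τ * x))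
    {l : ℕ} (ht : t ^ l = 1) : τ ^ l = 1 := by
  have := pow_mul_map hconj l 1
  rw [ht, one_mul, mul_one, mul_one] at this
  exact (hinj this).symm

variable {l : ℕ} [NeZero l]

lemma map_mul_pow_mul (hι : ∀ x y, ι (x + y) = ι x * ι y)
    (hconj : ∀ x, t * ι x * t⁻¹ = ι (τ * x)) (ht : t ^ l = 1) (x y : F) (a b : Fin l) :
    ι x * t ^ (a : ℕ) * (ι y * t ^ (b : ℕ))
      = ι (x + τ ^ (a : ℕ) * y) * t ^ ((a + b : Fin l) : ℕ) := by
  rw [pow_val_add_of_pow_eq_one ht, hι, mul_assoc, ← mul_assoc (t ^ _), pow_mul_map hconj]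
  group

lemma inv_map_mul_pow (hι : ∀ x y, ι (x + y) = ι x * ι y)
    (hconj : ∀ x, t * ι x * t⁻¹ = ι (τ * x)) (ht : t ^ l = 1) (y : F) (a : Fin l) :
    (ι y * t ^ (a : ℕ))⁻¹ = ι (-(τ ^ ((-a : Fin l) : ℕ) * y)) * t ^ ((-a : Fin l) : ℕ) := by
  refine inv_eq_of_mul_eq_one_left ?_
  rw [map_mul_pow_mul hι hconj ht, neg_add_cancel, neg_add_cancel, Fin.val_zero, pow_zero,
    mul_one, map_zero_of_map_add hι]

lemma mem_iff_pow_neg_mul_mem {K : Type*} [Ring K] [Module K F] {A : Fin l → Submodule K F}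
    (hι : ∀ x y, ι (x + y) = ι x * ι y) (hconj : ∀ x, t * ι x * t⁻¹ = ι (τ * x))
    (ht : t ^ l = 1) (hS : ∀ (a : Fin l) y, ι y * t ^ (a : ℕ) ∈ S ↔ y ∉ A a) (hSinv : S⁻¹ = S)
    (a : Fin l) (y : F) : y ∈ A a ↔ τ ^ ((-a : Fin l) : ℕ) * y ∈ A (-a) := by
  have h := hS a y
  rw [← hSinv, Set.mem_inv, inv_map_mul_pow hι hconj ht, hS, Submodule.neg_mem_iff] at h
  exact not_iff_not.mp h.symm

lemma natCard_mem_and_mul_mem [Fintype F] {B : Fin l → Set F} (hι : ∀ x y, ι (x + y) = ι x * ι y)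
    (hconj : ∀ x, t * ι x * t⁻¹ = ι (τ * x)) (ht : t ^ l = 1)
    (hbij : Function.Bijective fun p : Fin l × F => ι p.2 * t ^ (p.1 : ℕ))
    (hS : ∀ (a : Fin l) y, ι y * t ^ (a : ℕ) ∈ S ↔ y ∉ B a) (x : F) (m : Fin l) :
    Nat.card {d // d ∈ S ∧ ι x * t ^ (m : ℕ) * d ∈ S}
      = ∑ n, #{y | y ∉ B n ∧ x + τ ^ (m : ℕ) * y ∉ B (m + n)} :=
  (natCard_subtype_eq_sum hbij _).trans (by simp only [map_mul_pow_mul hι hconj ht, hS])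

end SkewProduct

section DifferenceSets

variable {G : Type*} [Group G] (D : Set G)

lemma natCard_quotient_pairs_eq (g : G) :
    Nat.card {pr : G × G // pr.1 ∈ D ∧ pr.2 ∈ D ∧ pr.1 * pr.2⁻¹ = g}
      = Nat.card {d // d ∈ D ∧ g * d ∈ D} :=
  Nat.card_congr
    { toFun := fun ⟨⟨d₁, d₂⟩, h₁, h₂, h₃⟩ => ⟨d₂, h₂, by rwa [← h₃, inv_mul_cancel_right]⟩
      invFun := fun d => ⟨(g * d.1, d.1), d.2.2, d.2.1, mul_inv_cancel_right _ _⟩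
      left_inv := fun ⟨⟨d₁, d₂⟩, _, _, h⟩ => by subst h; simp
      right_inv := fun _ => rfl }

lemma natCard_mul_inv_mem (g : G) : Nat.card {x // x * g⁻¹ ∈ D} = Nat.card D :=
  Nat.card_congr ((Equiv.mulRight g⁻¹).subtypeEquiv fun _ => Iff.rfl)

lemma natCard_mul_inv_mem_and_mul_inv_mem (hD : D⁻¹ = D) (g h : G) :
    Nat.card {x // x * g⁻¹ ∈ D ∧ x * h⁻¹ ∈ D} = Nat.card {d // d ∈ D ∧ g * h⁻¹ * d ∈ D} := by
  have hmem (z : G) : z⁻¹ ∈ D ↔ z ∈ D := by rw [← Set.mem_inv, hD]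
  refine Nat.card_congr (((Equiv.inv G).trans (Equiv.mulLeft h)).subtypeEquiv fun x => ?_)
  rw [← hmem (x * g⁻¹), ← hmem (x * h⁻¹), and_comm]
  simp [mul_assoc]

end DifferenceSets

section Parameters

variable {q r l : ℕ}

lemma one_lt_of_mul_sub_one_eq (hq : 2 ≤ q) (hr : 2 ≤ r) (hl : l * (q - 1) = q ^ r - 1) :
    1 < l := by
  have hqq : q * q ≤ q ^ r := by
    simpa [sq] using Nat.pow_le_pow_right (by omega) hr
  have h2q : 2 * q ≤ q * q := Nat.mul_le_mul_right q hq
  by_contra! h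
  interval_cases l <;> omega

lemma pow_sub_one_mul_add (hq : 1 ≤ q) (hr : 1 ≤ r) (hl : l * (q - 1) = q ^ r - 1) :
    q ^ (r - 1) * (q ^ r - 1) + l * q ^ (r - 1) = l * q ^ r := by
  obtain ⟨n, rfl⟩ : ∃ n, r = n + 1 := ⟨r - 1, by omega⟩
  have h1 : 1 ≤ q ^ (n + 1) := Nat.one_le_pow _ _ hq
  simp only [Nat.add_sub_cancel] at *
  zify [hq, h1] at hl ⊢
  linear_combination (-(q : ℤ) ^ n) * hl

lemma lambda1_add (hq : 2 ≤ q) (hr : 1 ≤ r) (hl : l * (q - 1) = q ^ r - 1) {c : ℕ}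
    (hc : c * (q - 1) = q ^ (r - 1) - 1) :
    q ^ (r - 1) * (q ^ r - q ^ (r - 1) - 1) + l * (2 * q ^ (r - 1))
      = l * q ^ r + q ^ (r - 1) * c := by
  obtain ⟨n, rfl⟩ : ∃ n, r = n + 1 := ⟨r - 1, by omega⟩
  simp only [Nat.add_sub_cancel] at *
  have h1 : 1 ≤ q ^ n := Nat.one_le_pow _ _ (by omega)
  have h2 : q ^ n + 1 ≤ q ^ (n + 1) := by
    rw [pow_succ]; nlinarith
  zify [h1, h2, show 1 ≤ q by omega, show 1 ≤ q ^ (n + 1) by omega,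
    show q ^ n ≤ q ^ (n + 1) by omega, show 1 ≤ q ^ (n + 1) - q ^ n by omega] at hl hc ⊢
  have hlc : (l : ℤ) = c + q ^ n := by
    have : ((l : ℤ) - c - q ^ n) * (q - 1) = 0 := by linear_combination hl - hc
    have hq1 : (q : ℤ) - 1 ≠ 0 := by omega
    linarith [(mul_eq_zero.mp this).resolve_right hq1]
  rw [hlc]
  linear_combination -(q : ℤ) ^ n * hc

lemma lambda2_add (hq : 1 ≤ q) (hr : 2 ≤ r) (hl : l * (q - 1) = q ^ r - 1) :
    q ^ (r - 2) * (q - 1) * (q ^ r - 1) + l * (2 * q ^ (r - 1))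
      = l * (q ^ r + q ^ (r - 2)) := by
  obtain ⟨n, rfl⟩ : ∃ n, r = n + 2 := ⟨r - 2, by omega⟩
  simp only [Nat.add_sub_cancel, show n + 2 - 1 = n + 1 by omega] at *
  zify [hq, Nat.one_le_pow _ _ hq] at hl ⊢
  linear_combination -(q : ℤ) ^ n * ((q : ℤ) - 1) * hl

lemma lambda1_add_pow_eq_lambda2 (hq : 2 ≤ q) (hr : 2 ≤ r) :
    q ^ (r - 1) * (q ^ r - q ^ (r - 1) - 1) + q ^ (r - 2)
      = q ^ (r - 2) * (q - 1) * (q ^ r - 1) := by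
  obtain ⟨n, rfl⟩ : ∃ n, r = n + 2 := ⟨r - 2, by omega⟩
  simp only [Nat.add_sub_cancel, show n + 2 - 1 = n + 1 by omega]
  have h1 : 1 ≤ q ^ n := Nat.one_le_pow _ _ (by omega)
  have h2 : q ^ (n + 1) + 1 ≤ q ^ (n + 2) := by
    have : 1 ≤ q ^ (n + 1) := Nat.one_le_pow _ _ (by omega)
    rw [pow_succ _ (n + 1)]; nlinarith
  zify [h1, h2, show 1 ≤ q by omega, show 1 ≤ q ^ (n + 2) by omega,
    show q ^ (n + 1) ≤ q ^ (n + 2) by omega, show 1 ≤ q ^ (n + 2) - q ^ (n + 1) by omega]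
  ring

end Parameters

section HyperplaneDifferenceSet

variable {K F G : Type*} [Field K] [Fintype K] [Field F] [Algebra K F] [Fintype F] [Group G]
  {l r : ℕ} {A : Fin l → Submodule K F} {ι : F → G} {t : G} {S : Set G}

lemma natCard_eq_of_hyperplanes (hF : Module.finrank K F = r) (hr : 1 ≤ r)
    (hl : l * (Fintype.card K - 1) = Fintype.card K ^ r - 1)
    (hA : ∀ i, Module.finrank K (A i) = r - 1)
    (hbij : Function.Bijective fun p : Fin l × F => ι p.2 * t ^ (p.1 : ℕ))
    (hS : ∀ (a : Fin l) y, ι y * t ^ (a : ℕ) ∈ S ↔ y ∉ A a) :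
    Nat.card S = Fintype.card K ^ (r - 1) * (Fintype.card K ^ r - 1) := by
  have h (a : Fin l) : #{y | y ∉ A a} + Fintype.card K ^ (r - 1) = Fintype.card K ^ r := by
    rw [← hA a, ← card_mem_submodule, add_comm, card_filter_add_card_filter_not, card_univ,
      Module.card_eq_pow_finrank (K := K), hF]
  have hsum := sum_add_card_mul h
  rw [Fintype.card_fin, sum_const, card_univ, Fintype.card_fin, smul_eq_mul] at hsum
  have := pow_sub_one_mul_add Fintype.card_pos hr hl
  rw [natCard_eq_sum_card_notMem hbij hS]
  simp only [SetLike.mem_coe]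
  omega

lemma natCard_mem_and_mul_mem_eq_ite [NeZero l] (hF : Module.finrank K F = r) (hr : 2 ≤ r)
    (hl : l * (Fintype.card K - 1) = Fintype.card K ^ r - 1)
    (hA : ∀ i, Module.finrank K (A i) = r - 1) (hAinj : Function.Injective A)
    (hAall : ∀ W : Submodule K F, Module.finrank K W = r - 1 → ∃ i, A i = W)
    {τ : Fˣ} (hι : ∀ x y, ι (x + y) = ι x * ι y) (hinj : Function.Injective ι)
    (hconj : ∀ x, t * ι x * t⁻¹ = ι ((τ : F) * x)) (ht : t ^ l = 1)
    (hbij : Function.Bijective fun p : Fin l × F => ι p.2 * t ^ (p.1 : ℕ))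
    (hS : ∀ (a : Fin l) y, ι y * t ^ (a : ℕ) ∈ S ↔ y ∉ A a) (hSinv : S⁻¹ = S)
    {g : G} (hg : g ≠ 1) :
    Nat.card {d // d ∈ S ∧ g * d ∈ S}
      = if g ∈ Set.range ι
        then Fintype.card K ^ (r - 1) * (Fintype.card K ^ r - Fintype.card K ^ (r - 1) - 1)
        else Fintype.card K ^ (r - 2) * (Fintype.card K - 1) * (Fintype.card K ^ r - 1) := by
  have hq : 2 ≤ Fintype.card K := Fintype.one_lt_card
  have hcardF : Fintype.card F = Fintype.card K ^ r := by
    rw [Module.card_eq_pow_finrank (K := K) (V := F), hF]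
  obtain ⟨⟨m, x⟩, rfl⟩ := hbij.2 g
  have hrange : ι x * t ^ (m : ℕ) ∈ Set.range ι ↔ m = 0 := by
    refine ⟨fun ⟨y, hy⟩ => ?_, fun hm => ⟨x, by simp [hm]⟩⟩
    have := @hbij.1 (0, y) (m, x) (by simpa using hy)
    exact (congrArg Prod.fst this).symm
  rw [natCard_mem_and_mul_mem hι hconj ht hbij hS]
  simp only [SetLike.mem_coe]
  split_ifs with hm
  · obtain rfl := hrange.mp hm
    have hx : x ≠ 0 := by rintro rfl; simp [map_zero_of_map_add hι] at hg
    have h := sum_card_notMem_and_add_notMem_self hA x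
    have := lambda1_add hq (by omega) hl (card_mem_mul_card_sub_one hF hl hA hAinj hAall hx)
    simp only [Fin.val_zero, pow_zero, one_mul, zero_add]
    rw [hcardF] at h
    omega
  · have hτ : τ ^ l = 1 := Units.ext (by simpa using pow_eq_one_of_conj hinj hconj ht)
    have hne := units_pow_smul_ne hAinj hτ (mem_iff_pow_neg_mul_mem hι hconj ht hS hSinv)
      (mt hrange.mpr hm)
    have h := sum_card_notMem_and_add_notMem_of_ne hF hA hne x
    have := lambda2_add (by omega) hr hl
    rw [Units.val_pow_eq_pow_val, hcardF] at h
    omega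

end HyperplaneDifferenceSet

theorem ddg_X2_union_X4_general
    (q r l : ℕ) (hr : 2 ≤ r)
    (hl : l = (q ^ r - 1) / (q - 1)) (hlpos : 0 < l)
    (K F : Type*) [Field K] [Field F] [Algebra K F] [Fintype K] [Fintype F]
    (hcardK : Fintype.card K = q) (hcardF : Fintype.card F = q ^ r)
    (hrank : Module.finrank K F = r)
    (τ : Fˣ)
    (G : Type*) [Group G] [Fintype G]
    (ι : F → G) (hι : ∀ x y : F, ι (x + y) = ι x * ι y)
    (hinj : Function.Injective ι)
    (t : G) (hconj : ∀ x : F, t * ι x * t⁻¹ = ι ((τ : F) * x))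
    (horder : orderOf t = l)
    (hcardG : Fintype.card G = q ^ r * l)
    (hdecomp : ∀ g : G, ∃ (x : F) (i : ℕ), i < l ∧ g = ι x * t ^ i)
    (A : Fin l → Submodule K F)
    (hA : ∀ i, Module.finrank K (A i) = r - 1)
    (hAinj : Function.Injective A)
    (hAall : ∀ W : Submodule K F, Module.finrank K W = r - 1 → ∃ i, A i = W)
    (X2 X4 S : Set G)
    (hX2 : X2 = ι '' ((Set.univ : Set F) \ (A ⟨0, hlpos⟩ : Set F)))
    (hX4 : X4 = {g : G | ∃ i : Fin l, (i : ℕ) ≠ 0 ∧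
      ∃ y ∈ ((Set.univ : Set F) \ (A i : Set F)), g = ι y * t ^ (i : ℕ)})
    (hS : S = {g : G | ∃ i : Fin l,
      ∃ y ∈ ((Set.univ : Set F) \ (A i : Set F)), g = ι y * t ^ (i : ℕ)})
    (hSinv : S⁻¹ = S)
    (k l1 l2 : ℕ)
    (hk : k = q ^ (r - 1) * (q ^ r - 1))
    (hl1 : l1 = q ^ (r - 1) * (q ^ r - q ^ (r - 1) - 1))
    (hl2 : l2 = q ^ (r - 2) * (q - 1) * (q ^ r - 1)) :
    X2 ∪ X4 = S ∧
    (X2 ∪ X4)⁻¹ = X2 ∪ X4 ∧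
    (1 : G) ∉ X2 ∪ X4 ∧
    Nat.card (X2 ∪ X4 : Set G) = k ∧
    Nat.card (Set.range ι) = q ^ r ∧
    (∀ g : G, g ≠ 1 →
      Nat.card {pr : G × G // pr.1 ∈ X2 ∪ X4 ∧ pr.2 ∈ X2 ∪ X4 ∧ pr.1 * pr.2⁻¹ = g}
        = if g ∈ Set.range ι then l1 else l2) ∧
    (∀ g : G, Nat.card {x : G // x * g⁻¹ ∈ X2 ∪ X4} = k) ∧
    (∀ g h : G, g ≠ h →
      Nat.card {x : G // x * g⁻¹ ∈ X2 ∪ X4 ∧ x * h⁻¹ ∈ X2 ∪ X4}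
        = if g * h⁻¹ ∈ Set.range ι then l1 else l2) ∧
    l1 ≠ l2 ∧ 1 < l ∧ 1 < q ^ r := by
  have : NeZero l := ⟨hlpos.ne'⟩
  subst hcardK hk hl1 hl2
  have hq : 2 ≤ Fintype.card K := Fintype.one_lt_card
  have hlq : l * (Fintype.card K - 1) = Fintype.card K ^ r - 1 :=
    hl ▸ Nat.div_mul_cancel (by simpa using Nat.sub_dvd_pow_sub_pow _ 1 r)
  have ht : t ^ l = 1 := horder ▸ pow_orderOf_eq_one t
  have hbij := bijective_map_mul_pow hdecomp (by rw [hcardG, hcardF])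
  have hmem := mem_iff_notMem_of_injective hbij.1 hS
  have hcard := natCard_eq_of_hyperplanes hrank (by omega) hlq hA hbij hmem
  have hdiff {g} := natCard_mem_and_mul_mem_eq_ite hrank hr hlq hA hAinj hAall hι hinj hconj ht
    hbij hmem hSinv (g := g)
  have hunion : X2 ∪ X4 = S := by
    rw [hX2, hX4, hS]
    exact image_union_setOf_eq_setOf (fun i => (A i : Set F)) hlpos
  rw [hunion]
  refine ⟨rfl, hSinv, ?_, hcard, ?_, fun g hg => ?_, fun g => ?_, fun g h hgh => ?_, ?_,
    one_lt_of_mul_sub_one_eq hq hr hlq, hcardF ▸ Fintype.one_lt_card⟩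
  · simpa [map_zero_of_map_add hι] using (hmem 0 0).not
  · rw [Nat.card_range_of_injective hinj, Nat.card_eq_fintype_card, hcardF]
  · rw [natCard_quotient_pairs_eq, hdiff hg]
  · rw [natCard_mul_inv_mem, hcard]
  · rw [natCard_mul_inv_mem_and_mul_inv_mem _ hSinv, hdiff (mul_inv_eq_one.not.mpr hgh)]
  · have := lambda1_add_pow_eq_lambda2 hq hr
    have := Nat.pow_pos (n := r - 2) (by omega : 0 < Fintype.card K)
    omega

/-- in the setup `G = F ⋊ ⟨τ⟩` with `S` inverse-closed, the set
`D = X2 ∪ X4 = S` is a reversible identity-free divisible difference set in `G`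
relative to the subgroup `F` (the range of `ι`) with parameters
`m = l`, `n = q^r`, `k = q^(r-1)(q^r−1)`, `λ1 = q^(r-1)(q^r−q^(r-1)−1)`,
`λ2 = q^(r-2)(q−1)(q^r−1)`; equivalently `Cay(G, X2 ∪ X4)` is a proper divisible
design graph with parameters `(q^r·l, k, λ1, λ2, l, q^r)` and canonical partition
into the cosets of `F`. -/
theorem ddg_X2_union_X4
    (p e q r l : ℕ) (hp : p.Prime) (he : 1 ≤ e) (hq : q = p ^ e) (hr : 2 ≤ r)
    (hl : l = (q ^ r - 1) / (q - 1)) (hlpos : 0 < l)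
    (K F : Type*) [Field K] [Field F] [Algebra K F] [Fintype K] [Fintype F]
    [DecidableEq F]
    (hcardK : Fintype.card K = q) (hcardF : Fintype.card F = q ^ r)
    (hrank : Module.finrank K F = r)
    (σ : Fˣ) (hσ : ∀ u : Fˣ, u ∈ Subgroup.zpowers σ)
    (τ : Fˣ) (hτ : τ = σ ^ (q - 1))
    (G : Type*) [Group G] [Fintype G]
    (ι : F → G) (hι : ∀ x y : F, ι (x + y) = ι x * ι y)
    (hinj : Function.Injective ι)
    (t : G) (hconj : ∀ x : F, t * ι x * t⁻¹ = ι ((τ : F) * x))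
    (horder : orderOf t = l)
    (hcardG : Fintype.card G = q ^ r * l)
    (hdecomp : ∀ g : G, ∃ (x : F) (i : ℕ), i < l ∧ g = ι x * t ^ i)
    (A : Fin l → Submodule K F)
    (hA : ∀ i, Module.finrank K (A i) = r - 1)
    (hAinj : Function.Injective A)
    (hAall : ∀ W : Submodule K F, Module.finrank K W = r - 1 → ∃ i, A i = W)
    (X2 X4 S : Set G)
    (hX2 : X2 = ι '' ((Set.univ : Set F) \ (A ⟨0, hlpos⟩ : Set F)))
    (hX4 : X4 = {g : G | ∃ i : Fin l, (i : ℕ) ≠ 0 ∧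
      ∃ y ∈ ((Set.univ : Set F) \ (A i : Set F)), g = ι y * t ^ (i : ℕ)})
    (hS : S = {g : G | ∃ i : Fin l,
      ∃ y ∈ ((Set.univ : Set F) \ (A i : Set F)), g = ι y * t ^ (i : ℕ)})
    (hSinv : S⁻¹ = S)
    (k l1 l2 : ℕ)
    (hk : k = q ^ (r - 1) * (q ^ r - 1))
    (hl1 : l1 = q ^ (r - 1) * (q ^ r - q ^ (r - 1) - 1))
    (hl2 : l2 = q ^ (r - 2) * (q - 1) * (q ^ r - 1)) :
    X2 ∪ X4 = S ∧
    (X2 ∪ X4)⁻¹ = X2 ∪ X4 ∧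
    (1 : G) ∉ X2 ∪ X4 ∧
    Nat.card (X2 ∪ X4 : Set G) = k ∧
    Nat.card (Set.range ι) = q ^ r ∧
    (∀ g : G, g ≠ 1 →
      Nat.card {pr : G × G // pr.1 ∈ X2 ∪ X4 ∧ pr.2 ∈ X2 ∪ X4 ∧ pr.1 * pr.2⁻¹ = g}
        = if g ∈ Set.range ι then l1 else l2) ∧
    (∀ g : G, Nat.card {x : G // x * g⁻¹ ∈ X2 ∪ X4} = k) ∧
    (∀ g h : G, g ≠ h →
      Nat.card {x : G // x * g⁻¹ ∈ X2 ∪ X4 ∧ x * h⁻¹ ∈ X2 ∪ X4}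
        = if g * h⁻¹ ∈ Set.range ι then l1 else l2) ∧
    l1 ≠ l2 ∧ 1 < l ∧ 1 < q ^ r :=
  ddg_X2_union_X4_general q r l hr hl hlpos K F hcardK hcardF hrank τ G ι hι hinj t hconj horder
    hcardG hdecomp A hA hAinj hAall X2 X4 S hX2 hX4 hS hSinv k l1 l2 hk hl1 hl2
end

section
/- In the weighing-matrix setup with t ≥ 3, the matrix M4 = J − M0 − M1 − M2 − M3 has all entries in {0,1}, and the following identities of integer matrices hold: M1*M3 = M3*M1 = M4; M2*M3 = M3*M2 = 3•M3 + 3•M4; and M3*M3 = 4(t−1)•M0 + 2(t−1)•M2 + 2(t−2)•(M3 + M4). -/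
/-!
Write `W = P - N`, where `P` and `N` mark the entries `1` and `-1`, let `S` be the swap matrix
on `Fin 2` and `B = I_t ⊗ J₄` the all-ones matrix on the diagonal blocks. Then all the matrices
are Kronecker products: `M1 = I ⊗ S`, `M2 = (B - I) ⊗ J₂`, `M3 = P ⊗ I + N ⊗ S` and, once we
know `P + N = J - B`, `M4 = N ⊗ I + P ⊗ S`. That the support of `W` is all of `J - B` comes
from the diagonal of `W * W`: `∑ k, W u k * W k u = 4(t - 1)` is a sum of terms `≤ 1` over the
`4(t - 1)` indices `k` outside the diagonal block of `u`, so each of these terms is `1`. The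
identities then reduce to `S² = I`, products of all-ones matrices, and
`2(P² + N²) = (P + N)² + W²`, `2(PN + NP) = (P + N)² - W²` with `W² = 4(t - 1) I`.
-/

open Matrix
open scoped Kronecker

namespace Matrix

variable {α : Type*} {l m n p k : Type*}

theorem sub_kronecker [NonUnitalNonAssocRing α] (A₁ A₂ : Matrix l m α) (B : Matrix n p α) :
    (A₁ - A₂) ⊗ₖ B = A₁ ⊗ₖ B - A₂ ⊗ₖ B := by
  ext; simp [_root_.sub_mul]

theorem kronecker_sub [NonUnitalNonAssocRing α] (A : Matrix l m α) (B₁ B₂ : Matrix n p α) :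
    A ⊗ₖ (B₁ - B₂) = A ⊗ₖ B₁ - A ⊗ₖ B₂ := by
  ext; simp [_root_.mul_sub]

theorem of_one_mul_of_one [NonAssocSemiring α] [Fintype m] :
    (of 1 : Matrix l m α) * (of 1 : Matrix m n α) = Fintype.card m • of 1 := by
  ext; simp [mul_apply]

theorem of_one_kronecker_of_one [MulOneClass α] :
    (of 1 : Matrix l m α) ⊗ₖ (of 1 : Matrix n p α) = of 1 := by
  ext; simp

section Blocks

variable (α m k) [CommRing α] [DecidableEq m]

def sameBlock : Matrix (m × k) (m × k) α := (1 : Matrix m m α) ⊗ₖ of 1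

def crossBlock : Matrix (m × k) (m × k) α := (of 1 - 1 : Matrix m m α) ⊗ₖ of 1

variable {α m k}

theorem sameBlock_apply (u w : m × k) : sameBlock α m k u w = if u.1 = w.1 then 1 else 0 := by
  simp [sameBlock, one_apply]

theorem crossBlock_apply (u w : m × k) : crossBlock α m k u w = if u.1 = w.1 then 0 else 1 := by
  simp only [crossBlock, kroneckerMap_apply, sub_apply, of_apply, Pi.one_apply, one_apply, mul_one]
  split_ifs <;> simp

theorem sameBlock_add_crossBlock : sameBlock α m k + crossBlock α m k = of 1 := by
  rw [sameBlock, crossBlock, ← add_kronecker, add_sub_cancel, of_one_kronecker_of_one]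

variable [Fintype m] [Fintype k]

theorem crossBlock_mul_of_one :
    crossBlock α m k * of 1 = ((Fintype.card k : α) * (Fintype.card m - 1)) • of 1 := by
  rw [crossBlock, ← of_one_kronecker_of_one, ← mul_kronecker_mul, Matrix.sub_mul, Matrix.one_mul,
    of_one_mul_of_one, of_one_mul_of_one, ← Nat.cast_smul_eq_nsmul α, ← Nat.cast_smul_eq_nsmul α,
    kronecker_smul, sub_kronecker, smul_kronecker]
  module

theorem sum_crossBlock_apply (u : m × k) :
    ∑ w, crossBlock α m k u w = Fintype.card k * (Fintype.card m - 1) := by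
  simpa [mul_apply] using congr_fun₂ (crossBlock_mul_of_one (α := α) (m := m) (k := k)) u u

theorem sameBlock_mul_crossBlock :
    sameBlock α m k * crossBlock α m k = Fintype.card k • crossBlock α m k := by
  simp only [sameBlock, crossBlock, ← mul_kronecker_mul, Matrix.one_mul, of_one_mul_of_one,
    kronecker_smul]

theorem crossBlock_mul_sameBlock :
    crossBlock α m k * sameBlock α m k = Fintype.card k • crossBlock α m k := by
  simp only [sameBlock, crossBlock, ← mul_kronecker_mul, Matrix.mul_one, of_one_mul_of_one,
    kronecker_smul]

theorem crossBlock_mul_self :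
    crossBlock α m k * crossBlock α m k =
      ((Fintype.card k : α) * (Fintype.card m - 2)) • crossBlock α m k +
      ((Fintype.card k : α) * (Fintype.card m - 1)) • sameBlock α m k := by
  have h : (of 1 - 1 : Matrix m m α) * (of 1 - 1) =
      ((Fintype.card m : α) - 2) • (of 1 - 1) + ((Fintype.card m : α) - 1) • 1 := by
    rw [Matrix.sub_mul, Matrix.mul_sub, Matrix.mul_sub, of_one_mul_of_one,
      ← Nat.cast_smul_eq_nsmul α, Matrix.mul_one, Matrix.one_mul, Matrix.mul_one]
    module
  simp only [sameBlock, crossBlock, ← mul_kronecker_mul, h, of_one_mul_of_one, kronecker_smul,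
    add_kronecker, smul_kronecker, ← Nat.cast_smul_eq_nsmul α]
  module

end Blocks

section SignedDoubleCover

def entryIndicator (W : Matrix m n ℤ) (c : ℤ) : Matrix m n ℤ :=
  W.map fun x => if x = c then 1 else 0

def finTwoSwap : Matrix (Fin 2) (Fin 2) ℤ := !![0, 1; 1, 0]

/-- The adjacency matrix of the double cover of the signed graph `W`: an entry `1` joins equal
sheets, an entry `-1` joins opposite sheets. -/
def signedDoubleCover [DecidableEq n] (W : Matrix m n ℤ) : Matrix (m × Fin 2) (n × Fin 2) ℤ :=
  W.entryIndicator 1 ⊗ₖ 1 + W.entryIndicator (-1) ⊗ₖ finTwoSwap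

theorem finTwoSwap_mul_self : finTwoSwap * finTwoSwap = 1 := by
  simp [finTwoSwap, one_fin_two]

theorem one_add_finTwoSwap : 1 + finTwoSwap = of 1 := by
  ext a b; fin_cases a <;> fin_cases b <;> rfl

theorem entryIndicator_neg (W : Matrix m n ℤ) (c : ℤ) :
    (-W).entryIndicator c = W.entryIndicator (-c) := by
  ext; simp [entryIndicator, neg_eq_iff_eq_neg]

theorem entryIndicator_one_sub_entryIndicator_neg_one {W : Matrix m n ℤ}
    (hW : ∀ i j, W i j = -1 ∨ W i j = 0 ∨ W i j = 1) :
    W.entryIndicator 1 - W.entryIndicator (-1) = W := by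
  ext i j; rcases hW i j with h | h | h <;> simp [entryIndicator, h]

theorem entryIndicator_one_add_entryIndicator_neg_one_apply {W : Matrix m n ℤ}
    (hW : ∀ i j, W i j = -1 ∨ W i j = 0 ∨ W i j = 1) (i : m) (j : n) :
    (W.entryIndicator 1 + W.entryIndicator (-1)) i j = if W i j = 0 then 0 else 1 := by
  rcases hW i j with h | h | h <;> simp [entryIndicator, h]

theorem signedDoubleCover_apply [DecidableEq n] (W : Matrix m n ℤ) (v : m) (w : n) (a b : Fin 2) :
    signedDoubleCover W (v, a) (w, b) =
      if (W v w = 1 ∧ a = b) ∨ (W v w = -1 ∧ a ≠ b) then 1 else 0 := by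
  fin_cases a <;> fin_cases b <;> by_cases h1 : W v w = 1 <;> by_cases h2 : W v w = -1 <;>
    simp_all [signedDoubleCover, entryIndicator, finTwoSwap]

theorem one_kronecker_finTwoSwap_eq_of [DecidableEq n] :
    (1 : Matrix n n ℤ) ⊗ₖ finTwoSwap = of fun p q => if p.1 = q.1 ∧ p.2 ≠ q.2 then 1 else 0 := by
  ext ⟨v, a⟩ ⟨w, b⟩
  fin_cases a <;> fin_cases b <;> simp [finTwoSwap, one_apply]

theorem sameBlock_sub_one_kronecker_eq_of [DecidableEq m] [DecidableEq k] :
    (sameBlock ℤ m k - 1) ⊗ₖ (1 + finTwoSwap) =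
      of fun p q => if p.1 ≠ q.1 ∧ p.1.1 = q.1.1 then 1 else 0 := by
  ext ⟨v, a⟩ ⟨w, b⟩
  simp only [one_add_finTwoSwap, kronecker_apply, sub_apply, sameBlock_apply, one_apply, of_apply]
  split_ifs <;> simp_all

theorem signedDoubleCover_neg [DecidableEq n] (W : Matrix m n ℤ) :
    signedDoubleCover (-W) = W.entryIndicator (-1) ⊗ₖ 1 + W.entryIndicator 1 ⊗ₖ finTwoSwap := by
  simp only [signedDoubleCover, entryIndicator_neg, neg_neg]

theorem signedDoubleCover_add_signedDoubleCover_neg [DecidableEq n] (W : Matrix m n ℤ) :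
    signedDoubleCover W + signedDoubleCover (-W) =
      (W.entryIndicator 1 + W.entryIndicator (-1)) ⊗ₖ (1 + finTwoSwap) := by
  rw [signedDoubleCover_neg, signedDoubleCover]
  simp only [add_kronecker, kronecker_add]
  abel

theorem one_kronecker_finTwoSwap_mul_signedDoubleCover [Fintype m] [DecidableEq m] [DecidableEq n]
    (W : Matrix m n ℤ) :
    ((1 : Matrix m m ℤ) ⊗ₖ finTwoSwap) * signedDoubleCover W = signedDoubleCover (-W) := by
  rw [signedDoubleCover_neg, signedDoubleCover]
  simp only [Matrix.mul_add, ← mul_kronecker_mul, Matrix.one_mul, Matrix.mul_one,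
    finTwoSwap_mul_self]
  abel

theorem signedDoubleCover_mul_one_kronecker_finTwoSwap [Fintype n] [DecidableEq n]
    (W : Matrix m n ℤ) :
    signedDoubleCover W * ((1 : Matrix n n ℤ) ⊗ₖ finTwoSwap) = signedDoubleCover (-W) := by
  rw [signedDoubleCover_neg, signedDoubleCover]
  simp only [Matrix.add_mul, ← mul_kronecker_mul, Matrix.one_mul, Matrix.mul_one,
    finTwoSwap_mul_self]
  abel

theorem kronecker_one_add_finTwoSwap_mul_signedDoubleCover [Fintype m] [DecidableEq n]
    (X : Matrix l m ℤ) (W : Matrix m n ℤ) :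
    (X ⊗ₖ (1 + finTwoSwap)) * signedDoubleCover W =
      (X * (W.entryIndicator 1 + W.entryIndicator (-1))) ⊗ₖ (1 + finTwoSwap) := by
  simp only [signedDoubleCover, Matrix.mul_add, Matrix.add_mul, ← mul_kronecker_mul,
    Matrix.one_mul, Matrix.mul_one, finTwoSwap_mul_self, kronecker_add, add_kronecker]
  abel

theorem signedDoubleCover_mul_kronecker_one_add_finTwoSwap [Fintype n] [DecidableEq n]
    [DecidableEq l] (W : Matrix m n ℤ) (X : Matrix n l ℤ) :
    signedDoubleCover W * (X ⊗ₖ (1 + finTwoSwap)) =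
      ((W.entryIndicator 1 + W.entryIndicator (-1)) * X) ⊗ₖ (1 + finTwoSwap) := by
  simp only [signedDoubleCover, Matrix.mul_add, Matrix.add_mul, ← mul_kronecker_mul,
    Matrix.one_mul, Matrix.mul_one, finTwoSwap_mul_self, kronecker_add, add_kronecker]
  abel

theorem two_smul_signedDoubleCover_mul_self [Fintype n] [DecidableEq n] (W : Matrix n n ℤ) :
    (2 : ℤ) • (signedDoubleCover W * signedDoubleCover W) =
      ((W.entryIndicator 1 + W.entryIndicator (-1)) * (W.entryIndicator 1 + W.entryIndicator (-1)))
        ⊗ₖ (1 + finTwoSwap) +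
      ((W.entryIndicator 1 - W.entryIndicator (-1)) * (W.entryIndicator 1 - W.entryIndicator (-1)))
        ⊗ₖ (1 - finTwoSwap) := by
  simp only [signedDoubleCover, Matrix.mul_add, Matrix.add_mul, Matrix.mul_sub, Matrix.sub_mul,
    ← mul_kronecker_mul, Matrix.one_mul, Matrix.mul_one, finTwoSwap_mul_self, kronecker_add,
    add_kronecker, kronecker_sub, sub_kronecker]
  module

end SignedDoubleCover

section WeighingMatrix

variable [Fintype m] [Fintype k] [DecidableEq m] [DecidableEq k]

theorem entryIndicator_one_add_entryIndicator_neg_one_eq_crossBlock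
    {W : Matrix (m × k) (m × k) ℤ} (hW : ∀ u w, W u w = -1 ∨ W u w = 0 ∨ W u w = 1)
    (hWW : W * W = ((Fintype.card k : ℤ) * (Fintype.card m - 1)) • 1)
    (hdiag : ∀ u w : m × k, u.1 = w.1 → W u w = 0) :
    W.entryIndicator 1 + W.entryIndicator (-1) = crossBlock ℤ m k := by
  have hle (u w : m × k) : W u w * W w u ≤ crossBlock ℤ m k u w := by
    rw [crossBlock_apply]
    split_ifs with h
    · simp [hdiag u w h]
    · rcases hW u w with h1 | h1 | h1 <;> rcases hW w u with h2 | h2 | h2 <;> simp [h1, h2]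
  have hsum (u : m × k) : ∑ w, W u w * W w u = ∑ w, crossBlock ℤ m k u w := by
    rw [sum_crossBlock_apply, ← mul_apply, hWW]
    simp
  ext u w
  rw [entryIndicator_one_add_entryIndicator_neg_one_apply hW, crossBlock_apply]
  by_cases h : u.1 = w.1
  · simp [hdiag u w h, h]
  · have hmul : W u w * W w u = 1 := by
      simpa [crossBlock_apply, h] using
        (Finset.sum_eq_sum_iff_of_le fun w _ => hle u w).1 (hsum u) w (Finset.mem_univ w)
    simp [h, left_ne_zero_of_mul_eq_one hmul]

theorem sameBlock_sub_one_kronecker_mul_signedDoubleCover {W : Matrix (m × k) (m × k) ℤ}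
    (hA : W.entryIndicator 1 + W.entryIndicator (-1) = crossBlock ℤ m k) :
    ((sameBlock ℤ m k - 1) ⊗ₖ (1 + finTwoSwap)) * signedDoubleCover W =
      ((Fintype.card k : ℤ) - 1) • (signedDoubleCover W + signedDoubleCover (-W)) := by
  rw [kronecker_one_add_finTwoSwap_mul_signedDoubleCover,
    signedDoubleCover_add_signedDoubleCover_neg, hA, Matrix.sub_mul, sameBlock_mul_crossBlock,
    Matrix.one_mul, ← Nat.cast_smul_eq_nsmul ℤ, sub_kronecker, smul_kronecker]
  module

theorem signedDoubleCover_mul_sameBlock_sub_one_kronecker {W : Matrix (m × k) (m × k) ℤ}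
    (hA : W.entryIndicator 1 + W.entryIndicator (-1) = crossBlock ℤ m k) :
    signedDoubleCover W * ((sameBlock ℤ m k - 1) ⊗ₖ (1 + finTwoSwap)) =
      ((Fintype.card k : ℤ) - 1) • (signedDoubleCover W + signedDoubleCover (-W)) := by
  rw [signedDoubleCover_mul_kronecker_one_add_finTwoSwap,
    signedDoubleCover_add_signedDoubleCover_neg, hA, Matrix.mul_sub, crossBlock_mul_sameBlock,
    Matrix.mul_one, ← Nat.cast_smul_eq_nsmul ℤ, sub_kronecker, smul_kronecker]
  module

theorem two_smul_signedDoubleCover_mul_self_eq {W : Matrix (m × k) (m × k) ℤ}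
    (hW : ∀ u w, W u w = -1 ∨ W u w = 0 ∨ W u w = 1)
    (hWW : W * W = ((Fintype.card k : ℤ) * (Fintype.card m - 1)) • 1)
    (hA : W.entryIndicator 1 + W.entryIndicator (-1) = crossBlock ℤ m k) :
    (2 : ℤ) • (signedDoubleCover W * signedDoubleCover W) =
      (2 * ((Fintype.card k : ℤ) * (Fintype.card m - 1))) •
        ((1 : Matrix (m × k) (m × k) ℤ) ⊗ₖ 1) +
      ((Fintype.card k : ℤ) * (Fintype.card m - 1)) •
        ((sameBlock ℤ m k - 1) ⊗ₖ (1 + finTwoSwap)) +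
      ((Fintype.card k : ℤ) * (Fintype.card m - 2)) •
        (signedDoubleCover W + signedDoubleCover (-W)) := by
  rw [two_smul_signedDoubleCover_mul_self, entryIndicator_one_sub_entryIndicator_neg_one hW, hWW,
    signedDoubleCover_add_signedDoubleCover_neg, hA, crossBlock_mul_self]
  simp only [add_kronecker, sub_kronecker, kronecker_add, kronecker_sub, smul_kronecker]
  module

end WeighingMatrix

end Matrix

theorem weighing_matrix_identities_general
    (t : ℕ)
    (W : Matrix (Fin t × Fin 4) (Fin t × Fin 4) ℤ)
    (hWent : ∀ u w, W u w = -1 ∨ W u w = 0 ∨ W u w = 1)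
    (hWW : W * W = (4 * ((t : ℤ) - 1)) • (1 : Matrix (Fin t × Fin 4) (Fin t × Fin 4) ℤ))
    (hWdiag : ∀ u w : Fin t × Fin 4, u.1 = w.1 → W u w = 0)
    (M0 M1 M2 M3 M4 J : Matrix ((Fin t × Fin 4) × Fin 2) ((Fin t × Fin 4) × Fin 2) ℤ)
    (hM0 : M0 = 1)
    (hM1 : M1 = Matrix.of fun pq rs =>
      if pq.1 = rs.1 ∧ pq.2 ≠ rs.2 then 1 else 0)
    (hM2 : M2 = Matrix.of fun pq rs =>
      if pq.1 ≠ rs.1 ∧ pq.1.1 = rs.1.1 then 1 else 0)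
    (hM3 : M3 = Matrix.of fun pq rs =>
      if (W pq.1 rs.1 = 1 ∧ pq.2 = rs.2) ∨ (W pq.1 rs.1 = -1 ∧ pq.2 ≠ rs.2)
        then 1 else 0)
    (hJ : J = Matrix.of fun _ _ => 1)
    (hM4 : M4 = J - M0 - M1 - M2 - M3) :
    (∀ x y, M4 x y = 0 ∨ M4 x y = 1) ∧
    M1 * M3 = M4 ∧ M3 * M1 = M4 ∧
    M2 * M3 = (3 : ℤ) • M3 + (3 : ℤ) • M4 ∧
    M3 * M2 = (3 : ℤ) • M3 + (3 : ℤ) • M4 ∧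
    M3 * M3 = (4 * ((t : ℤ) - 1)) • M0 + (2 * ((t : ℤ) - 1)) • M2
        + (2 * ((t : ℤ) - 2)) • (M3 + M4) := by
  have hWW' : W * W = ((Fintype.card (Fin 4) : ℤ) * (Fintype.card (Fin t) - 1)) • 1 := by
    simpa using hWW
  have hA := entryIndicator_one_add_entryIndicator_neg_one_eq_crossBlock hWent hWW' hWdiag
  have h0 : M0 = 1 ⊗ₖ 1 := hM0.trans one_kronecker_one.symm
  have h1 : M1 = 1 ⊗ₖ finTwoSwap := hM1.trans one_kronecker_finTwoSwap_eq_of.symm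
  have h2 : M2 = (sameBlock ℤ (Fin t) (Fin 4) - 1) ⊗ₖ (1 + finTwoSwap) :=
    hM2.trans sameBlock_sub_one_kronecker_eq_of.symm
  have h3 : M3 = signedDoubleCover W := by
    rw [hM3]; ext ⟨v, a⟩ ⟨w, b⟩; simp [signedDoubleCover_apply]
  have hJ' : J = (sameBlock ℤ _ _ + crossBlock ℤ _ _) ⊗ₖ (1 + finTwoSwap) := by
    rw [hJ, sameBlock_add_crossBlock, one_add_finTwoSwap, of_one_kronecker_of_one]; rfl
  have h4 : M4 = signedDoubleCover (-W) := by
    rw [hM4, hJ', h0, h1, h2, h3,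
      eq_sub_of_add_eq' (signedDoubleCover_add_signedDoubleCover_neg W), hA]
    simp only [add_kronecker, sub_kronecker, kronecker_add]
    abel
  refine ⟨fun ⟨v, a⟩ ⟨w, b⟩ => ?_, ?_, ?_, ?_, ?_, ?_⟩
  · rw [h4, signedDoubleCover_apply]; split_ifs <;> simp
  · rw [h1, h3, h4, one_kronecker_finTwoSwap_mul_signedDoubleCover]
  · rw [h1, h3, h4, signedDoubleCover_mul_one_kronecker_finTwoSwap]
  · rw [h2, h3, h4, sameBlock_sub_one_kronecker_mul_signedDoubleCover hA]; norm_num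
  · rw [h2, h3, h4, signedDoubleCover_mul_sameBlock_sub_one_kronecker hA]; norm_num
  · rw [h0, h2, h3, h4]
    apply smul_right_injective _ (two_ne_zero' ℤ)
    simp only [two_smul_signedDoubleCover_mul_self_eq hWent hWW' hA, Fintype.card_fin]
    module

/-- in the weighing-matrix setup with `t ≥ 3`, the matrix
`M4 = J − M0 − M1 − M2 − M3` is a `{0,1}`-matrix, and
`M1*M3 = M3*M1 = M4`, `M2*M3 = M3*M2 = 3•M3 + 3•M4`,
`M3*M3 = 4(t−1)•M0 + 2(t−1)•M2 + 2(t−2)•(M3 + M4)`. -/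
theorem weighing_matrix_identities
    (t : ℕ) (ht : 3 ≤ t)
    (W : Matrix (Fin t × Fin 4) (Fin t × Fin 4) ℤ)
    (hWsymm : Wᵀ = W)
    (hWent : ∀ u w, W u w = -1 ∨ W u w = 0 ∨ W u w = 1)
    (hWW : W * W = (4 * ((t : ℤ) - 1)) • (1 : Matrix (Fin t × Fin 4) (Fin t × Fin 4) ℤ))
    (hWdiag : ∀ u w : Fin t × Fin 4, u.1 = w.1 → W u w = 0)
    (M0 M1 M2 M3 M4 J : Matrix ((Fin t × Fin 4) × Fin 2) ((Fin t × Fin 4) × Fin 2) ℤ)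
    (hM0 : M0 = 1)
    (hM1 : M1 = Matrix.of fun pq rs =>
      if pq.1 = rs.1 ∧ pq.2 ≠ rs.2 then 1 else 0)
    (hM2 : M2 = Matrix.of fun pq rs =>
      if pq.1 ≠ rs.1 ∧ pq.1.1 = rs.1.1 then 1 else 0)
    (hM3 : M3 = Matrix.of fun pq rs =>
      if (W pq.1 rs.1 = 1 ∧ pq.2 = rs.2) ∨ (W pq.1 rs.1 = -1 ∧ pq.2 ≠ rs.2)
        then 1 else 0)
    (hJ : J = Matrix.of fun _ _ => 1)
    (hM4 : M4 = J - M0 - M1 - M2 - M3) :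
    (∀ x y, M4 x y = 0 ∨ M4 x y = 1) ∧
    M1 * M3 = M4 ∧ M3 * M1 = M4 ∧
    M2 * M3 = (3 : ℤ) • M3 + (3 : ℤ) • M4 ∧
    M3 * M2 = (3 : ℤ) • M3 + (3 : ℤ) • M4 ∧
    M3 * M3 = (4 * ((t : ℤ) - 1)) • M0 + (2 * ((t : ℤ) - 1)) • M2
        + (2 * ((t : ℤ) - 2)) • (M3 + M4) :=
  weighing_matrix_identities_general t W hWent hWW hWdiag M0 M1 M2 M3 M4 J hM0 hM1 hM2 hM3 hJ hM4
end

section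
/- In the weighing-matrix setup with t ≥ 3, let P be the {0,1}-matrix on V = (Fin t × Fin 4) × Fin 2 with P[(v,a),(w,b)] = 1 iff v = w. Then for each i ∈ {3,4}, the matrix A = M2 + Mi is a symmetric {0,1}-matrix with zero diagonal satisfying A*J = (4t+2)•J and A*A = (4t+2)•I + 6•(P−I) + (2t+2)•(J−P); that is, A is the adjacency matrix of a proper divisible design graph with parameters (8t, 4t+2, 6, 2t+2, 4t, 2), the canonical partition being into the 4t pairs {(v,0),(v,1)}. -/
/-!
Write `V = U × Fin 2` with `U = Fin t × Fin 4` and view matrices on `V` as Kronecker products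
`X ⊗ₖ Y` with `Y` a `2 × 2` matrix. Let `J₂` be the all-ones and `S = s sᵀ` (`s = (1, -1)`) the
`2 × 2` matrices, and `E = I_t ⊗ₖ J₄` the block matrix on `U`. Each row of `W` has squared norm
`4(t-1)` and at most `4(t-1)` nonzero entries, so `W` is `±1` off the diagonal blocks; hence
`2 M₃ = (J - E) ⊗ₖ J₂ + W ⊗ₖ S`, and `2 A = X ⊗ₖ J₂ ± W ⊗ₖ S` with `X = J + E - 2I`.
Since `J₂ S = S J₂ = 0`, `J₂² = 2 J₂` and `S² = 2 S`, the cross terms vanish and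
`4 A² = X² ⊗ₖ 2 J₂ + W² ⊗ₖ 2 S`. Finally `W² = 4(t-1) I` and `X² = 4(t+1) J + 4 I`: the `E`-terms
of `X²` cancel exactly because the blocks have size `4`.
-/

open Matrix
open scoped Kronecker

namespace WeighingMatrixDDG

section Kronecker

variable {α l m n p : Type*} [NonUnitalNonAssocRing α]

theorem sub_kronecker (A₁ A₂ : Matrix l m α) (B : Matrix n p α) :
    (A₁ - A₂) ⊗ₖ B = A₁ ⊗ₖ B - A₂ ⊗ₖ B := by
  ext; simp [sub_mul]

theorem kronecker_sub (A : Matrix l m α) (B₁ B₂ : Matrix n p α) :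
    A ⊗ₖ (B₁ - B₂) = A ⊗ₖ B₁ - A ⊗ₖ B₂ := by
  ext; simp [mul_sub]

end Kronecker

def ones (n : Type*) : Matrix n n ℤ := of fun _ _ => 1

@[simp] theorem ones_apply {n : Type*} (i j : n) : ones n i j = 1 := rfl

theorem ones_mul_ones (n : Type*) [Fintype n] :
    ones n * ones n = (Fintype.card n : ℤ) • ones n := by
  ext; simp [mul_apply]

theorem ones_kronecker_ones (m n : Type*) : ones m ⊗ₖ ones n = ones (m × n) := by
  ext; simp

theorem transpose_ones (n : Type*) : (ones n)ᵀ = ones n := rfl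

def altSign : Matrix (Fin 2) (Fin 2) ℤ := 2 • 1 - ones (Fin 2)

theorem altSign_apply (a b : Fin 2) : altSign a b = if a = b then 1 else -1 := by
  fin_cases a <;> fin_cases b <;> rfl

theorem transpose_altSign : altSignᵀ = altSign := by
  ext a b; fin_cases a <;> fin_cases b <;> rfl

theorem ones_mul_altSign : ones (Fin 2) * altSign = 0 := by
  ext a b; fin_cases a <;> fin_cases b <;> rfl

theorem altSign_mul_ones : altSign * ones (Fin 2) = 0 := by
  ext a b; fin_cases a <;> fin_cases b <;> rfl

theorem altSign_mul_self : altSign * altSign = (2 : ℤ) • altSign := by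
  ext a b; fin_cases a <;> fin_cases b <;> rfl

theorem kronecker_add_smul_mul_self {U : Type*} [Fintype U] (X W : Matrix U U ℤ) {ε : ℤ}
    (hε : ε * ε = 1) :
    (X ⊗ₖ ones (Fin 2) + ε • (W ⊗ₖ altSign)) * (X ⊗ₖ ones (Fin 2) + ε • (W ⊗ₖ altSign)) =
      (X * X) ⊗ₖ ((2 : ℤ) • ones (Fin 2)) + (W * W) ⊗ₖ ((2 : ℤ) • altSign) := by
  simp only [add_mul, mul_add, smul_mul_assoc, mul_smul_comm, ← mul_kronecker_mul, ones_mul_ones,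
    ones_mul_altSign, altSign_mul_ones, altSign_mul_self, kronecker_zero, smul_zero, smul_smul, hε,
    one_smul, zero_add, add_zero, Fintype.card_fin, Nat.cast_ofNat]

theorem kronecker_add_smul_mul_ones {U : Type*} [Fintype U] (X W : Matrix U U ℤ) (ε : ℤ) :
    (X ⊗ₖ ones (Fin 2) + ε • (W ⊗ₖ altSign)) * ones (U × Fin 2) =
      (X * ones U) ⊗ₖ ((2 : ℤ) • ones (Fin 2)) := by
  rw [← ones_kronecker_ones]
  simp only [add_mul, smul_mul_assoc, ← mul_kronecker_mul, ones_mul_ones, altSign_mul_ones,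
    kronecker_zero, smul_zero, add_zero, Fintype.card_fin, Nat.cast_ofNat]

def blockOnes (t : ℕ) : Matrix (Fin t × Fin 4) (Fin t × Fin 4) ℤ :=
  (1 : Matrix (Fin t) (Fin t) ℤ) ⊗ₖ ones (Fin 4)

theorem blockOnes_apply {t : ℕ} (u w : Fin t × Fin 4) :
    blockOnes t u w = if u.1 = w.1 then 1 else 0 := by
  simp [blockOnes, one_apply]

theorem blockOnes_mul_ones (t : ℕ) : blockOnes t * ones _ = (4 : ℤ) • ones _ := by
  rw [blockOnes, ← ones_kronecker_ones, ← mul_kronecker_mul, ones_mul_ones, one_mul,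
    kronecker_smul, Fintype.card_fin, Nat.cast_ofNat]

def evenPart (t : ℕ) : Matrix (Fin t × Fin 4) (Fin t × Fin 4) ℤ :=
  ones _ + blockOnes t - (2 : ℤ) • 1

theorem evenPart_apply {t : ℕ} (u w : Fin t × Fin 4) :
    evenPart t u w = if u = w then 0 else if u.1 = w.1 then 2 else 1 := by
  obtain ⟨v, i⟩ := u
  obtain ⟨v', i'⟩ := w
  simp only [evenPart, blockOnes, Matrix.sub_apply, Matrix.add_apply, kronecker_apply, one_apply,
    ones_apply, Matrix.smul_apply, Prod.mk.injEq]
  by_cases hv : v = v' <;> by_cases hi : i = i' <;> simp [hv, hi]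

theorem transpose_evenPart {t : ℕ} : (evenPart t)ᵀ = evenPart t := by
  ext u w
  simp only [transpose_apply, evenPart_apply, eq_comm]

theorem evenPart_mul_self (t : ℕ) :
    evenPart t * evenPart t = (4 * t + 4 : ℤ) • ones _ + (4 : ℤ) • 1 := by
  simp only [evenPart, blockOnes, ← ones_kronecker_ones, ← one_kronecker_one (α := ℤ),
    add_mul, mul_add, sub_mul, mul_sub, smul_mul_assoc, mul_smul_comm, ← mul_kronecker_mul,
    ones_mul_ones, one_mul, mul_one, kronecker_smul, smul_kronecker, Fintype.card_fin, Nat.cast_ofNat]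
  module

theorem evenPart_mul_ones (t : ℕ) :
    evenPart t * ones _ = (4 * t + 2 : ℤ) • ones _ := by
  simp only [evenPart, blockOnes, ← ones_kronecker_ones, ← one_kronecker_one (α := ℤ),
    add_mul, sub_mul, smul_mul_assoc, ← mul_kronecker_mul, ones_mul_ones,
    one_mul, kronecker_smul, smul_kronecker, Fintype.card_fin]
  module

variable {t : ℕ} {W : Matrix (Fin t × Fin 4) (Fin t × Fin 4) ℤ}

theorem apply_eq_one_or_neg_one_of_fst_ne (hWsymm : Wᵀ = W)
    (hWent : ∀ u w, W u w = -1 ∨ W u w = 0 ∨ W u w = 1)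
    (hWW : W * W = (4 * ((t : ℤ) - 1)) • (1 : Matrix (Fin t × Fin 4) (Fin t × Fin 4) ℤ))
    (hWdiag : ∀ u w : Fin t × Fin 4, u.1 = w.1 → W u w = 0)
    {u w : Fin t × Fin 4} (huw : u.1 ≠ w.1) : W u w = 1 ∨ W u w = -1 := by
  let g : Fin t × Fin 4 → ℤ := fun w => 1 - blockOnes t u w
  have hg : ∑ w, g w = 4 * (t - 1) := by
    have h := congr_fun₂ (sub_mul (ones _) (blockOnes t) (ones _)) u u
    rw [ones_mul_ones, blockOnes_mul_ones] at h
    simp only [mul_apply, ones_apply, mul_one, Matrix.sub_apply, Matrix.smul_apply, smul_eq_mul,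
      Fintype.card_prod, Fintype.card_fin] at h
    rw [h]
    push_cast
    ring
  have hle : ∀ w ∈ Finset.univ, W u w * W u w ≤ g w := by
    intro w _
    by_cases h : u.1 = w.1
    · simp [g, blockOnes_apply, h, hWdiag u w h]
    · rcases hWent u w with h' | h' | h' <;> simp [g, blockOnes_apply, h, h']
  have hrow : ∑ w, W u w * W u w = ∑ w, g w := by
    have hsq := congr_fun₂ hWW u u
    have hsymm : ∀ w, W w u = W u w := fun w => congr_fun₂ hWsymm u w
    simp only [mul_apply, hsymm, Matrix.smul_apply, one_apply_eq, smul_eq_mul, mul_one] at hsq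
    rw [hsq, hg]
  have := (Finset.sum_eq_sum_iff_of_le hle).1 hrow w (Finset.mem_univ w)
  simp only [g, blockOnes_apply, if_neg huw, sub_zero] at this
  exact mul_self_eq_one_iff.mp this

abbrev V (t : ℕ) := (Fin t × Fin 4) × Fin 2

def classMatrix (t : ℕ) : Matrix (V t) (V t) ℤ :=
  of fun pq rs => if pq.1 = rs.1 then 1 else 0

def pairSwap (t : ℕ) : Matrix (V t) (V t) ℤ :=
  of fun pq rs => if pq.1 = rs.1 ∧ pq.2 ≠ rs.2 then 1 else 0

def sameGroup (t : ℕ) : Matrix (V t) (V t) ℤ :=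
  of fun pq rs => if pq.1 ≠ rs.1 ∧ pq.1.1 = rs.1.1 then 1 else 0

def signedLift (W : Matrix (Fin t × Fin 4) (Fin t × Fin 4) ℤ) : Matrix (V t) (V t) ℤ :=
  of fun pq rs =>
    if (W pq.1 rs.1 = 1 ∧ pq.2 = rs.2) ∨ (W pq.1 rs.1 = -1 ∧ pq.2 ≠ rs.2) then 1 else 0

theorem classMatrix_eq_kronecker : classMatrix t = 1 ⊗ₖ ones (Fin 2) := by
  ext ⟨u, a⟩ ⟨w, b⟩
  simp [classMatrix, one_apply]

theorem sameGroup_eq_kronecker : sameGroup t = (blockOnes t - 1) ⊗ₖ ones (Fin 2) := by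
  ext ⟨u, a⟩ ⟨w, b⟩
  by_cases huw : u = w
  · subst huw; simp [sameGroup, blockOnes_apply]
  · by_cases h : u.1 = w.1 <;> simp [sameGroup, blockOnes_apply, one_apply, huw, h]

theorem one_add_pairSwap_add_sameGroup :
    1 + pairSwap t + sameGroup t = blockOnes t ⊗ₖ ones (Fin 2) := by
  ext ⟨u, a⟩ ⟨w, b⟩
  by_cases huw : u = w
  · subst huw
    by_cases hab : a = b
    · subst hab; simp [pairSwap, sameGroup, blockOnes_apply]
    · simp [pairSwap, sameGroup, blockOnes_apply, one_apply, hab]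
  · by_cases h : u.1 = w.1 <;> simp [pairSwap, sameGroup, blockOnes_apply, one_apply, huw, h]

theorem two_smul_signedLift (hWdiag : ∀ u w : Fin t × Fin 4, u.1 = w.1 → W u w = 0)
    (hWoff : ∀ u w : Fin t × Fin 4, u.1 ≠ w.1 → W u w = 1 ∨ W u w = -1) :
    (2 : ℤ) • signedLift W = (ones _ - blockOnes t) ⊗ₖ ones (Fin 2) + W ⊗ₖ altSign := by
  ext ⟨u, a⟩ ⟨w, b⟩
  by_cases h : u.1 = w.1
  · simp [signedLift, blockOnes_apply, h, hWdiag u w h]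
  · rcases hWoff u w h with hW | hW <;> by_cases hab : a = b <;>
      simp [signedLift, blockOnes_apply, altSign_apply, h, hW, hab]

theorem two_smul_sameGroup_add_signedLift
    (hWdiag : ∀ u w : Fin t × Fin 4, u.1 = w.1 → W u w = 0)
    (hWoff : ∀ u w : Fin t × Fin 4, u.1 ≠ w.1 → W u w = 1 ∨ W u w = -1) :
    (2 : ℤ) • (sameGroup t + signedLift W) =
      evenPart t ⊗ₖ ones (Fin 2) + (1 : ℤ) • (W ⊗ₖ altSign) := by
  rw [smul_add, two_smul_signedLift hWdiag hWoff, sameGroup_eq_kronecker, evenPart]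
  simp only [sub_kronecker, add_kronecker, smul_kronecker]
  module

theorem two_smul_sameGroup_add_complement
    (hWdiag : ∀ u w : Fin t × Fin 4, u.1 = w.1 → W u w = 0)
    (hWoff : ∀ u w : Fin t × Fin 4, u.1 ≠ w.1 → W u w = 1 ∨ W u w = -1) :
    (2 : ℤ) • (sameGroup t + (ones (V t) - 1 - pairSwap t - sameGroup t - signedLift W)) =
      evenPart t ⊗ₖ ones (Fin 2) + (-1 : ℤ) • (W ⊗ₖ altSign) := by
  have hcompl : ones (V t) - 1 - pairSwap t - sameGroup t =
      (ones _ - blockOnes t) ⊗ₖ ones (Fin 2) := by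
    rw [sub_kronecker, ones_kronecker_ones, ← one_add_pairSwap_add_sameGroup]
    abel
  rw [hcompl, smul_add, smul_sub, two_smul_signedLift hWdiag hWoff, sameGroup_eq_kronecker,
    evenPart]
  simp only [sub_kronecker, add_kronecker, smul_kronecker]
  module

theorem transpose_classMatrix : (classMatrix t)ᵀ = classMatrix t := by
  rw [classMatrix_eq_kronecker, ← kroneckerMap_transpose, transpose_one, transpose_ones]

theorem classMatrix_apply_eq_zero_or_one (x y : V t) :
    classMatrix t x y = 0 ∨ classMatrix t x y = 1 := by
  by_cases h : x.1 = y.1 <;> simp [classMatrix, h]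

theorem classMatrix_apply_self (x : V t) : classMatrix t x x = 1 := by
  simp [classMatrix]

theorem classMatrix_mul_self : classMatrix t * classMatrix t = (2 : ℤ) • classMatrix t := by
  rw [classMatrix_eq_kronecker, ← mul_kronecker_mul, one_mul, ones_mul_ones, kronecker_smul,
    Fintype.card_fin, Nat.cast_ofNat]

section TwiceAdjacency

variable {A : Matrix (V t) (V t) ℤ} {ε : ℤ}

theorem transpose_eq_of_two_smul (hWsymm : Wᵀ = W)
    (hA : (2 : ℤ) • A = evenPart t ⊗ₖ ones (Fin 2) + ε • (W ⊗ₖ altSign)) : Aᵀ = A := by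
  apply smul_right_injective _ (two_ne_zero : (2 : ℤ) ≠ 0)
  simp only
  rw [← transpose_smul, hA, transpose_add, transpose_smul, ← kroneckerMap_transpose,
    ← kroneckerMap_transpose, transpose_evenPart, transpose_altSign, transpose_ones, hWsymm]

theorem two_mul_apply_of_two_smul
    (hA : (2 : ℤ) • A = evenPart t ⊗ₖ ones (Fin 2) + ε • (W ⊗ₖ altSign)) (u w a b) :
    2 * A (u, a) (w, b) = evenPart t u w + ε * (W u w * altSign a b) := by
  simpa only [Matrix.smul_apply, Matrix.add_apply, kronecker_apply, ones_apply, mul_one,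
    smul_eq_mul] using congr_fun₂ hA (u, a) (w, b)

theorem apply_eq_zero_or_one_of_two_smul (hε : ε = 1 ∨ ε = -1)
    (hWdiag : ∀ u w : Fin t × Fin 4, u.1 = w.1 → W u w = 0)
    (hWoff : ∀ u w : Fin t × Fin 4, u.1 ≠ w.1 → W u w = 1 ∨ W u w = -1)
    (hA : (2 : ℤ) • A = evenPart t ⊗ₖ ones (Fin 2) + ε • (W ⊗ₖ altSign)) (x y : V t) :
    A x y = 0 ∨ A x y = 1 := by
  obtain ⟨u, a⟩ := x
  obtain ⟨w, b⟩ := y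
  have h := two_mul_apply_of_two_smul hA u w a b
  rw [evenPart_apply, altSign_apply] at h
  by_cases hblock : u.1 = w.1
  · rw [hWdiag u w hblock] at h
    by_cases huw : u = w <;> simp [huw, hblock] at h <;> subst_vars <;> omega
  · have huw : u ≠ w := fun h => hblock (congrArg Prod.fst h)
    rcases hε with rfl | rfl <;> rcases hWoff u w hblock with hW | hW <;>
      by_cases hab : a = b <;> simp [huw, hblock, hW, hab] at h <;> subst_vars <;> omega

theorem apply_self_eq_zero_of_two_smul
    (hWdiag : ∀ u w : Fin t × Fin 4, u.1 = w.1 → W u w = 0)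
    (hA : (2 : ℤ) • A = evenPart t ⊗ₖ ones (Fin 2) + ε • (W ⊗ₖ altSign)) (x : V t) :
    A x x = 0 := by
  have h := two_mul_apply_of_two_smul hA x.1 x.1 x.2 x.2
  rw [evenPart_apply, hWdiag _ _ rfl] at h
  simpa using h

theorem mul_ones_of_two_smul
    (hA : (2 : ℤ) • A = evenPart t ⊗ₖ ones (Fin 2) + ε • (W ⊗ₖ altSign)) :
    A * ones (V t) = (4 * t + 2 : ℤ) • ones (V t) := by
  apply smul_right_injective _ (two_ne_zero : (2 : ℤ) ≠ 0)
  simp only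
  rw [← smul_mul_assoc, hA, kronecker_add_smul_mul_ones, evenPart_mul_ones, smul_kronecker,
    kronecker_smul, ones_kronecker_ones, smul_comm]

theorem mul_self_of_two_smul (hε : ε = 1 ∨ ε = -1)
    (hWW : W * W = (4 * ((t : ℤ) - 1)) • (1 : Matrix (Fin t × Fin 4) (Fin t × Fin 4) ℤ))
    (hA : (2 : ℤ) • A = evenPart t ⊗ₖ ones (Fin 2) + ε • (W ⊗ₖ altSign)) :
    A * A = (4 * t + 2 : ℤ) • 1 + (6 : ℤ) • (classMatrix t - 1)
      + (2 * t + 2 : ℤ) • (ones (V t) - classMatrix t) := by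
  have hεε : ε * ε = 1 := by rcases hε with rfl | rfl <;> norm_num
  apply smul_right_injective _ (four_ne_zero : (4 : ℤ) ≠ 0)
  simp only
  rw [show (4 : ℤ) • (A * A) = ((2 : ℤ) • A) * ((2 : ℤ) • A) by
      rw [smul_mul_smul_comm]; norm_num,
    hA, kronecker_add_smul_mul_self _ _ hεε, evenPart_mul_self, hWW, altSign,
    classMatrix_eq_kronecker, ← ones_kronecker_ones (Fin t × Fin 4) (Fin 2),
    ← one_kronecker_one (α := ℤ) (m := Fin t × Fin 4) (n := Fin 2)]
  simp only [add_kronecker, kronecker_sub, smul_kronecker, kronecker_smul]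
  module

theorem ddg_of_two_smul (hε : ε = 1 ∨ ε = -1) (hWsymm : Wᵀ = W)
    (hWdiag : ∀ u w : Fin t × Fin 4, u.1 = w.1 → W u w = 0)
    (hWoff : ∀ u w : Fin t × Fin 4, u.1 ≠ w.1 → W u w = 1 ∨ W u w = -1)
    (hWW : W * W = (4 * ((t : ℤ) - 1)) • (1 : Matrix (Fin t × Fin 4) (Fin t × Fin 4) ℤ))
    (hA : (2 : ℤ) • A = evenPart t ⊗ₖ ones (Fin 2) + ε • (W ⊗ₖ altSign)) :
    Aᵀ = A ∧ (∀ x y, A x y = 0 ∨ A x y = 1) ∧ (∀ x, A x x = 0) ∧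
      A * ones (V t) = ((4 * t + 2 : ℕ) : ℤ) • ones (V t) ∧
      A * A = ((4 * t + 2 : ℕ) : ℤ) • 1 + (6 : ℤ) • (classMatrix t - 1)
        + ((2 * t + 2 : ℕ) : ℤ) • (ones (V t) - classMatrix t) := by
  push_cast
  exact ⟨transpose_eq_of_two_smul hWsymm hA, apply_eq_zero_or_one_of_two_smul hε hWdiag hWoff hA,
    apply_self_eq_zero_of_two_smul hWdiag hA, mul_ones_of_two_smul hA,
    mul_self_of_two_smul hε hWW hA⟩

end TwiceAdjacency

end WeighingMatrixDDG

open WeighingMatrixDDG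

/-- in the weighing-matrix setup with `t ≥ 3` and `P` the matrix of the
partition into the `4t` pairs `{(v,0),(v,1)}`, for each `i ∈ {3,4}` the matrix
`A = M2 + Mi` is the adjacency matrix of a proper divisible design graph with
parameters `(8t, 4t+2, 6, 2t+2, 4t, 2)` and class matrix `P`. -/
theorem weighing_matrix_ddg
    (t : ℕ) (ht : 3 ≤ t)
    (W : Matrix (Fin t × Fin 4) (Fin t × Fin 4) ℤ)
    (hWsymm : Wᵀ = W)
    (hWent : ∀ u w, W u w = -1 ∨ W u w = 0 ∨ W u w = 1)
    (hWW : W * W = (4 * ((t : ℤ) - 1)) • (1 : Matrix (Fin t × Fin 4) (Fin t × Fin 4) ℤ))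
    (hWdiag : ∀ u w : Fin t × Fin 4, u.1 = w.1 → W u w = 0)
    (M0 M1 M2 M3 M4 J P : Matrix ((Fin t × Fin 4) × Fin 2) ((Fin t × Fin 4) × Fin 2) ℤ)
    (hM0 : M0 = 1)
    (hM1 : M1 = Matrix.of fun pq rs =>
      if pq.1 = rs.1 ∧ pq.2 ≠ rs.2 then 1 else 0)
    (hM2 : M2 = Matrix.of fun pq rs =>
      if pq.1 ≠ rs.1 ∧ pq.1.1 = rs.1.1 then 1 else 0)
    (hM3 : M3 = Matrix.of fun pq rs =>
      if (W pq.1 rs.1 = 1 ∧ pq.2 = rs.2) ∨ (W pq.1 rs.1 = -1 ∧ pq.2 ≠ rs.2)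
        then 1 else 0)
    (hJ : J = Matrix.of fun _ _ => 1)
    (hM4 : M4 = J - M0 - M1 - M2 - M3)
    (hP : P = Matrix.of fun pq rs => if pq.1 = rs.1 then 1 else 0) :
    Fintype.card ((Fin t × Fin 4) × Fin 2) = 8 * t ∧
    Pᵀ = P ∧ (∀ x y, P x y = 0 ∨ P x y = 1) ∧ (∀ x, P x x = 1) ∧
    P * P = (2 : ℤ) • P ∧
    (∀ A : Matrix ((Fin t × Fin 4) × Fin 2) ((Fin t × Fin 4) × Fin 2) ℤ,
      A = M2 + M3 ∨ A = M2 + M4 →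
      Aᵀ = A ∧
      (∀ x y, A x y = 0 ∨ A x y = 1) ∧
      (∀ x, A x x = 0) ∧
      A * J = ((4 * t + 2 : ℕ) : ℤ) • J ∧
      A * A = ((4 * t + 2 : ℕ) : ℤ) • M0 + (6 : ℤ) • (P - M0)
          + ((2 * t + 2 : ℕ) : ℤ) • (J - P)) ∧
    (6 : ℕ) ≠ 2 * t + 2 ∧ 1 < 4 * t ∧ 1 < 2 := by
  obtain rfl : M1 = pairSwap t := hM1
  obtain rfl : M2 = sameGroup t := hM2
  obtain rfl : M3 = signedLift W := hM3
  obtain rfl : J = ones (V t) := hJ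
  obtain rfl : P = classMatrix t := hP
  subst hM0 hM4
  have hWoff : ∀ u w : Fin t × Fin 4, u.1 ≠ w.1 → W u w = 1 ∨ W u w = -1 :=
    fun _ _ => apply_eq_one_or_neg_one_of_fst_ne hWsymm hWent hWW hWdiag
  refine ⟨by simp only [Fintype.card_prod, Fintype.card_fin]; ring, transpose_classMatrix, classMatrix_apply_eq_zero_or_one,
    classMatrix_apply_self, classMatrix_mul_self, ?_, by omega, by omega, by norm_num⟩
  rintro A (rfl | rfl)
  · exact ddg_of_two_smul (Or.inl rfl) hWsymm hWdiag hWoff hWW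
      (two_smul_sameGroup_add_signedLift hWdiag hWoff)
  · exact ddg_of_two_smul (Or.inr rfl) hWsymm hWdiag hWoff hWW
      (two_smul_sameGroup_add_complement hWdiag hWoff)
end

section
/- Let A be a finite abelian group, N ≤ A a proper nontrivial subgroup, and D ⊆ A a divisible difference set relative to N with parameters (m,n,k,λ1,λ2), m, n > 1, satisfying the intersection condition. Let G = Dih(A) with reflecting element b, and set X1 = N\{1}, X2 = A\N, X3 = Db, X4 = (A\D)b ⊆ G. Then each of the sets {1_G}, X1, X2, X3, X4 is inverse-closed in G, and the ℤ-submodule of the group algebra MonoidAlgebra ℤ G spanned by the five elements underline({1_G}), underline(X1), underline(X2), underline(X3), underline(X4) is closed under multiplication (i.e. it is a subring of MonoidAlgebra ℤ G, an S-ring of rank 5 over G). -/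
open Classical

/-- `underline Y = Σ_{y ∈ Y} y` in the group algebra `MonoidAlgebra ℤ G`. -/
noncomputable def underline {G : Type*} [Group G] [Fintype G] (Y : Set G) :
    MonoidAlgebra ℤ G :=
  ∑ y ∈ Y.toFinset, MonoidAlgebra.single y (1 : ℤ)

/-! Identify `ℤ[A]` with its image in `ℤ[G]`; write `Ȳ` for `underline Y` and `β` for `b`.
In the commutative ring `ℤ[A]` the relevant products are counting identities:
`N̄ N̄ = |N| N̄`, `Ā Ȳ = |Y| Ā`, the intersection condition says `N̄ D̄ = μ Ā`, and the
difference-set condition says `D̄ · (D⁻¹)‾ = (k - λ₁) + (λ₁ - λ₂) N̄ + λ₂ Ā`.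
Moreover `β² = 1` and `β x β = x*`, where `*` is the involution of `ℤ[A]` induced by `a ↦ a⁻¹`;
it fixes `1, N̄, Ā`. So a product of two of `1, N̄, Ā, D̄ β, Ā β` is `x y`, `(x y) β` or
`x y*` with `x, y ∈ {1, N̄, Ā, D̄}`, hence lies in their span, and this span is the span of
the five basic sets by a unitriangular change of basis. -/

open MonoidAlgebra Submodule

theorem mul_mem_span_of_forall_mul_mem {K B : Type*} [CommSemiring K] [Semiring B] [Algebra K B]
    {s : Set B} (h : ∀ x ∈ s, ∀ y ∈ s, x * y ∈ span K s) {u v : B}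
    (hu : u ∈ span K s) (hv : v ∈ span K s) : u * v ∈ span K s := by
  have hle : span K s * span K s ≤ span K s := by
    rw [span_mul_span, span_le]
    rintro _ ⟨x, hx, y, hy, rfl⟩
    exact h x hx y hy
  exact hle (mul_mem_mul hu hv)

theorem span_consecutive_sub {K M : Type*} [Ring K] [AddCommGroup M] [Module K M]
    (x₁ x₂ x₃ y₁ y₂ : M) :
    span K {x₁, x₂ - x₁, x₃ - x₂, y₁, y₂ - y₁} = span K {x₁, x₂, x₃, y₁, y₂} := by
  apply le_antisymm <;> rw [span_le] <;>
    simp only [Set.insert_subset_iff, Set.singleton_subset_iff, SetLike.mem_coe]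
  · refine ⟨?_, sub_mem ?_ ?_, sub_mem ?_ ?_, ?_, sub_mem ?_ ?_⟩ <;>
      exact subset_span (by simp)
  · have h : ∀ z ∈ ({x₁, x₂ - x₁, x₃ - x₂, y₁, y₂ - y₁} : Set M),
        z ∈ span K {x₁, x₂ - x₁, x₃ - x₂, y₁, y₂ - y₁} := fun _ hz => subset_span hz
    have hx₂ : x₂ ∈ span K {x₁, x₂ - x₁, x₃ - x₂, y₁, y₂ - y₁} := by
      simpa using add_mem (h x₁ (by simp)) (h (x₂ - x₁) (by simp))
    refine ⟨h _ (by simp), hx₂, ?_, h _ (by simp), ?_⟩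
    · simpa using add_mem hx₂ (h (x₃ - x₂) (by simp))
    · simpa using add_mem (h y₁ (by simp)) (h (y₂ - y₁) (by simp))

theorem mul_mem_span_image_union_image_mul {K R S : Type*} [CommSemiring K] [CommSemiring R]
    [Semiring S] [Algebra K R] [Algebra K S] (φ : R →ₐ[K] S) (σ : R →ₐ[K] R) {β : S}
    (hβ : β * β = 1) (hβφ : ∀ p, β * φ p = φ (σ p) * β) {s t : Set R}
    (hss : ∀ p ∈ s, ∀ p' ∈ s, p * p' ∈ span K s) (hst : ∀ p ∈ s, ∀ q ∈ t, p * q ∈ span K t)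
    (hσ : ∀ p ∈ s, σ p = p) (htt : ∀ q ∈ t, ∀ q' ∈ σ '' t, q * q' ∈ span K s) {u v : S}
    (hu : u ∈ span K (φ '' s ∪ (φ · * β) '' t)) (hv : v ∈ span K (φ '' s ∪ (φ · * β) '' t)) :
    u * v ∈ span K (φ '' s ∪ (φ · * β) '' t) := by
  have hs : ∀ p ∈ span K s, φ p ∈ span K (φ '' s ∪ (φ · * β) '' t) := fun p hp =>
    span_mono Set.subset_union_left (apply_mem_span_image_of_mem_span φ.toLinearMap hp)
  have ht : ∀ q ∈ span K t, φ q * β ∈ span K (φ '' s ∪ (φ · * β) '' t) := fun q hq =>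
    span_mono Set.subset_union_right
      (apply_mem_span_image_of_mem_span ((LinearMap.mulRight K β).comp φ.toLinearMap) hq)
  refine mul_mem_span_of_forall_mul_mem ?_ hu hv
  rintro _ (⟨p, hp, rfl⟩ | ⟨q, hq, rfl⟩) _ (⟨p', hp', rfl⟩ | ⟨q', hq', rfl⟩)
  · rw [← map_mul]
    exact hs _ (hss p hp p' hp')
  · rw [← mul_assoc, ← map_mul]
    exact ht _ (hst p hp q' hq')
  · rw [mul_assoc, hβφ, hσ p' hp', ← mul_assoc, ← map_mul, mul_comm]
    exact ht _ (hst p' hp' q hq)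
  · rw [mul_assoc, ← mul_assoc β, hβφ, mul_assoc, hβ, mul_one, ← map_mul]
    exact hs _ (htt q hq _ ⟨q', hq', rfl⟩)

theorem natCard_pairs_mul_inv_eq {G : Type*} [Group G] (D : Set G) (g : G) :
    Nat.card {pr : G × G // pr.1 ∈ D ∧ pr.2 ∈ D ∧ pr.1 * pr.2⁻¹ = g}
      = Nat.card {z // z ∈ D⁻¹ ∧ g * z⁻¹ ∈ D} :=
  Nat.card_congr
    { toFun := fun pr => ⟨pr.1.2⁻¹, by simpa using pr.2.2.1, by
        obtain ⟨⟨d₁, d₂⟩, hd₁, -, rfl⟩ := pr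
        simpa using hd₁⟩
      invFun := fun z => ⟨(g * z.1⁻¹, z.1⁻¹), z.2.2, z.2.1, by simp⟩
      left_inv := fun pr => by
        obtain ⟨⟨d₁, d₂⟩, -, -, rfl⟩ := pr
        simp
      right_inv := fun z => by simp }

section GroupAlgebra

variable {G : Type*} [Group G] [Fintype G]

theorem underline_singleton_one : underline ({1} : Set G) = 1 := by
  simp [underline, one_def]

theorem underline_diff {Y Z : Set G} (h : Z ⊆ Y) :
    underline (Y \ Z) = underline Y - underline Z := by
  simp only [underline, Set.toFinset_sdiff]
  exact Finset.sum_sdiff_eq_sub (Set.toFinset_subset_toFinset.2 h)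

theorem underline_mul_single (Y : Set G) (g : G) :
    underline Y * single g 1 = underline ((· * g) '' Y) := by
  rw [underline, underline, Set.toFinset_image, Finset.sum_image (fun x _ y _ => mul_right_cancel),
    Finset.sum_mul]
  simp [single_mul_single]

theorem mapDomainAlgHom_underline {H : Type*} [Group H] [Fintype H] (f : G →* H)
    (hf : Function.Injective f) (Y : Set G) :
    mapDomainAlgHom ℤ ℤ f (underline Y) = underline (f '' Y) := by
  rw [underline, underline, map_sum, Set.toFinset_image, Finset.sum_image fun x _ y _ h => hf h]
  simp [mapDomain_single]

theorem coeff_underline (Y : Set G) (g : G) :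
    (underline Y).coeff g = if g ∈ Y then 1 else 0 := by
  simp [underline, coeff_sum, Finsupp.single_apply]

theorem coeff_underline_mul_underline (Y Z : Set G) (g : G) :
    (underline Y * underline Z).coeff g = Nat.card {z // z ∈ Z ∧ g * z⁻¹ ∈ Y} := by
  rw [underline.eq_1 Z, Finset.mul_sum, coeff_sum, Finsupp.finsetSum_apply]
  simp only [coeff_mul_single_apply, coeff_underline, mul_one]
  rw [Finset.sum_boole, Nat.card_eq_fintype_card, Fintype.card_subtype]
  congr 2
  ext
  simp

theorem underline_univ_mul (Z : Set G) :
    underline Set.univ * underline Z = (Nat.card Z : ℤ) • underline (Set.univ : Set G) := by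
  ext g
  simp only [coeff_underline_mul_underline, coeff_smul_apply, coeff_underline, Set.mem_univ,
    and_true, if_true, smul_eq_mul, mul_one]

theorem underline_subgroup_mul_self (N : Subgroup G) :
    underline (N : Set G) * underline N = (Nat.card N : ℤ) • underline (N : Set G) := by
  ext g
  rw [coeff_underline_mul_underline, coeff_smul_apply, coeff_underline]
  by_cases hg : g ∈ N
  · have hiff : ∀ z, z ∈ (N : Set G) ∧ g * z⁻¹ ∈ (N : Set G) ↔ z ∈ N := fun z => by
      simpa using fun hz => N.mul_mem hg (N.inv_mem hz)
    rw [Nat.card_congr (Equiv.subtypeEquivRight hiff), if_pos (SetLike.mem_coe.2 hg),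
      smul_eq_mul, mul_one]
  · have : IsEmpty {z // z ∈ (N : Set G) ∧ g * z⁻¹ ∈ (N : Set G)} :=
      ⟨fun ⟨z, hz, hgz⟩ => hg (by simpa using N.mul_mem hgz hz)⟩
    rw [Nat.card_of_isEmpty, if_neg (mt SetLike.mem_coe.1 hg), smul_zero, Nat.cast_zero]

theorem underline_subgroup_mul_of_card_eq (N : Subgroup G) (Z : Set G) (μ : ℕ)
    (hZ : ∀ g : G, Nat.card {z // z ∈ Z ∧ z * g⁻¹ ∈ N} = μ) :
    underline (N : Set G) * underline Z = (μ : ℤ) • underline (Set.univ : Set G) := by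
  ext g
  have hiff : ∀ z, g * z⁻¹ ∈ N ↔ z * g⁻¹ ∈ N := fun z => by
    rw [← inv_mem_iff, mul_inv_rev, inv_inv]
  simp only [coeff_underline_mul_underline, SetLike.mem_coe, hiff, hZ, coeff_smul_apply,
    coeff_underline, Set.mem_univ, if_true, smul_eq_mul, mul_one]

theorem underline_mul_underline_inv (N : Subgroup G) (D : Set G) (l₁ l₂ : ℕ)
    (hD : ∀ g : G, g ≠ 1 →
      Nat.card {pr : G × G // pr.1 ∈ D ∧ pr.2 ∈ D ∧ pr.1 * pr.2⁻¹ = g}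
        = if g ∈ N then l₁ else l₂) :
    underline D * underline D⁻¹ = ((Nat.card D : ℤ) - l₁) • 1
      + ((l₁ : ℤ) - l₂) • underline (N : Set G) + (l₂ : ℤ) • underline (Set.univ : Set G) := by
  ext g
  rw [← underline_singleton_one]
  simp only [coeff_add, coeff_smul, Finsupp.add_apply, Finsupp.smul_apply, coeff_underline,
    coeff_underline_mul_underline, Set.mem_singleton_iff, SetLike.mem_coe, Set.mem_univ, if_true,
    smul_eq_mul]
  by_cases hg : g = 1
  · subst hg
    have hiff : ∀ z, z ∈ D⁻¹ ∧ 1 * z⁻¹ ∈ D ↔ z ∈ D⁻¹ := fun z => by simp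
    rw [Nat.card_congr (Equiv.subtypeEquivRight hiff), Set.natCard_inv]
    simp
  · rw [← natCard_pairs_mul_inv_eq, hD g hg]
    split_ifs <;> simp

end GroupAlgebra

section CommGroup

variable {A : Type*} [CommGroup A] [Fintype A] (N : Subgroup A) (D : Set A)

theorem mapDomainAlgHom_inv_underline (Y : Set A) :
    mapDomainAlgHom ℤ ℤ invMonoidHom (underline Y) = underline Y⁻¹ := by
  rw [mapDomainAlgHom_underline _ inv_injective, ← Set.image_inv_eq_inv]
  rfl

theorem underline_mul_univ (Y : Set A) :
    underline Y * underline Set.univ = (Nat.card Y : ℤ) • underline (Set.univ : Set A) := by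
  rw [mul_comm, underline_univ_mul]

theorem mul_mem_span_one_subgroup_univ :
    ∀ p ∈ ({1, underline (N : Set A), underline Set.univ} : Set (MonoidAlgebra ℤ A)),
    ∀ p' ∈ ({1, underline (N : Set A), underline Set.univ} : Set (MonoidAlgebra ℤ A)),
      p * p' ∈ span ℤ {1, underline (N : Set A), underline Set.univ} := by
  have h1 : (1 : MonoidAlgebra ℤ A) ∈ span ℤ {1, underline (N : Set A), underline Set.univ} :=
    subset_span (by simp)
  have hN : underline (N : Set A) ∈ span ℤ {1, underline (N : Set A), underline Set.univ} :=
    subset_span (by simp)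
  have hA : underline Set.univ ∈ span ℤ {1, underline (N : Set A), underline Set.univ} :=
    subset_span (by simp)
  simp only [Set.mem_insert_iff, Set.mem_singleton_iff]
  rintro p (rfl | rfl | rfl) p' (rfl | rfl | rfl) <;>
    simp only [one_mul, mul_one, underline_subgroup_mul_self, underline_mul_univ,
      underline_univ_mul] <;>
    first
      | assumption
      | exact smul_mem _ _ ‹_›

theorem mul_mem_span_underline_univ (μ : ℕ)
    (hμ : ∀ g : A, Nat.card {x // x ∈ D ∧ x * g⁻¹ ∈ N} = μ) :
    ∀ p ∈ ({1, underline (N : Set A), underline Set.univ} : Set (MonoidAlgebra ℤ A)),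
    ∀ q ∈ ({underline D, underline Set.univ} : Set (MonoidAlgebra ℤ A)),
      p * q ∈ span ℤ {underline D, underline Set.univ} := by
  have hD : underline D ∈ span ℤ {underline D, underline (Set.univ : Set A)} :=
    subset_span (by simp)
  have hA : underline Set.univ ∈ span ℤ {underline D, underline (Set.univ : Set A)} :=
    subset_span (by simp)
  simp only [Set.mem_insert_iff, Set.mem_singleton_iff]
  rintro p (rfl | rfl | rfl) q (rfl | rfl) <;>
    simp only [one_mul, underline_subgroup_mul_of_card_eq N D μ hμ, underline_mul_univ,
      underline_univ_mul] <;>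
    first
      | assumption
      | exact smul_mem _ _ ‹_›

theorem mul_inv_mem_span_one_subgroup_univ (l₁ l₂ : ℕ)
    (hdds : ∀ g : A, g ≠ 1 →
      Nat.card {pr : A × A // pr.1 ∈ D ∧ pr.2 ∈ D ∧ pr.1 * pr.2⁻¹ = g}
        = if g ∈ N then l₁ else l₂) :
    ∀ q ∈ ({underline D, underline Set.univ} : Set (MonoidAlgebra ℤ A)),
    ∀ q' ∈ ({underline D⁻¹, underline Set.univ} : Set (MonoidAlgebra ℤ A)),
      q * q' ∈ span ℤ {1, underline (N : Set A), underline Set.univ} := by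
  have h1 : (1 : MonoidAlgebra ℤ A) ∈ span ℤ {1, underline (N : Set A), underline Set.univ} :=
    subset_span (by simp)
  have hN : underline (N : Set A) ∈ span ℤ {1, underline (N : Set A), underline Set.univ} :=
    subset_span (by simp)
  have hA : underline Set.univ ∈ span ℤ {1, underline (N : Set A), underline Set.univ} :=
    subset_span (by simp)
  simp only [Set.mem_insert_iff, Set.mem_singleton_iff]
  rintro q (rfl | rfl) q' (rfl | rfl)
  · rw [underline_mul_underline_inv N D l₁ l₂ hdds]
    exact add_mem (add_mem (smul_mem _ _ h1) (smul_mem _ _ hN)) (smul_mem _ _ hA)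
  · rw [underline_mul_univ]
    exact smul_mem _ _ hA
  · rw [underline_univ_mul]
    exact smul_mem _ _ hA
  · rw [underline_univ_mul]
    exact smul_mem _ _ hA

end CommGroup

section Dihedral

variable {A : Type*} [CommGroup A] {G : Type*} [Group G] (ι : A →* G) {b : G}

theorem single_mul_mapDomainAlgHom (hb : ∀ a, b * ι a * b⁻¹ = ι a⁻¹) (p : MonoidAlgebra ℤ A) :
    single b 1 * mapDomainAlgHom ℤ ℤ ι p
      = mapDomainAlgHom ℤ ℤ ι (mapDomainAlgHom ℤ ℤ invMonoidHom p) * single b 1 := by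
  induction p using MonoidAlgebra.induction_on with
  | of a => simp [single_mul_single, ← hb a]
  | add p q hp hq => simp only [map_add, mul_add, add_mul, hp, hq]
  | smul r p hp => simp only [map_zsmul, mul_smul_comm, smul_mul_assoc, hp]

theorem inv_map_mul_eq_self (hb2 : b * b = 1) (hb : ∀ a, b * ι a * b⁻¹ = ι a⁻¹) (a : A) :
    (ι a * b)⁻¹ = ι a * b := by
  have hbinv : b⁻¹ = b := inv_eq_of_mul_eq_one_right hb2
  have hconj : b * ι a⁻¹ * b = ι a := by simpa [hbinv] using hb a⁻¹
  rw [mul_inv_rev, hbinv, ← map_inv, eq_comm, ← hconj, mul_assoc, hb2, mul_one]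

theorem inv_image_map_mul (hb2 : b * b = 1) (hb : ∀ a, b * ι a * b⁻¹ = ι a⁻¹) (Y : Set A) :
    ((fun a => ι a * b) '' Y)⁻¹ = (fun a => ι a * b) '' Y := by
  rw [← Set.image_inv_eq_inv, Set.image_image]
  simp_rw [inv_map_mul_eq_self ι hb2 hb]

theorem span_underline_dihedral [Fintype A] [Fintype G] (hinj : Function.Injective ι)
    (N : Subgroup A) (D : Set A) :
    span ℤ {underline {(1 : G)}, underline (ι '' ((N : Set A) \ {1})),
        underline (ι '' (Set.univ \ (N : Set A))), underline ((fun a => ι a * b) '' D),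
        underline ((fun a => ι a * b) '' (Set.univ \ D))}
      = span ℤ (mapDomainAlgHom ℤ ℤ ι '' {1, underline (N : Set A), underline Set.univ}
        ∪ (mapDomainAlgHom ℤ ℤ ι · * single b 1) '' {underline D, underline Set.univ}) := by
  have hφ := mapDomainAlgHom_underline ι hinj
  have hrefl (Y : Set A) :
      underline ((fun a => ι a * b) '' Y) = mapDomainAlgHom ℤ ℤ ι (underline Y) * single b 1 := by
    rw [hφ, underline_mul_single, Set.image_image]
  rw [← hφ, ← hφ, hrefl, hrefl, underline_diff (by simp), underline_diff (by simp),
    underline_diff (by simp), map_sub, map_sub, map_sub, sub_mul, underline_singleton_one,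
    underline_singleton_one, map_one, span_consecutive_sub]
  simp only [Set.image_insert_eq, Set.image_singleton, Set.insert_union, Set.singleton_union,
    map_one]

end Dihedral

theorem dihedral_sring_of_dds_general
    (A : Type*) [CommGroup A] [Fintype A]
    (G : Type*) [Group G] [Fintype G]
    (ι : A →* G) (hinj : Function.Injective ι)
    (b : G) (hb2 : b * b = 1)
    (hbconj : ∀ a : A, b * ι a * b⁻¹ = ι a⁻¹)
    (N : Subgroup A)
    (D : Set A)
    (l1 l2 : ℕ)
    (hdds : ∀ g : A, g ≠ 1 →
      Nat.card {pr : A × A // pr.1 ∈ D ∧ pr.2 ∈ D ∧ pr.1 * pr.2⁻¹ = g}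
        = if g ∈ N then l1 else l2)
    (hic : ∃ μ : ℕ, ∀ g : A, Nat.card {x : A // x ∈ D ∧ x * g⁻¹ ∈ N} = μ)
    (X1 X2 X3 X4 : Set G)
    (hX1 : X1 = ι '' ((N : Set A) \ {1}))
    (hX2 : X2 = ι '' ((Set.univ : Set A) \ (N : Set A)))
    (hX3 : X3 = (fun a => ι a * b) '' D)
    (hX4 : X4 = (fun a => ι a * b) '' ((Set.univ : Set A) \ D)) :
    ({(1 : G)} : Set G)⁻¹ = {(1 : G)} ∧ X1⁻¹ = X1 ∧ X2⁻¹ = X2 ∧ X3⁻¹ = X3 ∧ X4⁻¹ = X4 ∧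
    (∀ u v : MonoidAlgebra ℤ G,
      u ∈ Submodule.span ℤ ({underline {(1 : G)}, underline X1, underline X2,
        underline X3, underline X4} : Set (MonoidAlgebra ℤ G)) →
      v ∈ Submodule.span ℤ ({underline {(1 : G)}, underline X1, underline X2,
        underline X3, underline X4} : Set (MonoidAlgebra ℤ G)) →
      u * v ∈ Submodule.span ℤ ({underline {(1 : G)}, underline X1, underline X2,
        underline X3, underline X4} : Set (MonoidAlgebra ℤ G))) := by
  obtain ⟨μ, hμ⟩ := hic
  subst hX1 hX2 hX3 hX4
  have hNinv : ((N : Set A) \ {1})⁻¹ = (N : Set A) \ {1} := by ext; simp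
  have hNcinv : (Set.univ \ (N : Set A))⁻¹ = Set.univ \ (N : Set A) := by ext; simp
  refine ⟨by simp, by rw [← Set.image_inv, hNinv], by rw [← Set.image_inv, hNcinv],
    inv_image_map_mul ι hb2 hbconj D, inv_image_map_mul ι hb2 hbconj _, fun u v hu hv => ?_⟩
  rw [span_underline_dihedral ι hinj N D] at hu hv ⊢
  have hβ : single b (1 : ℤ) * single b 1 = 1 := by simp [single_mul_single, hb2, one_def]
  have hfix : ∀ p ∈ ({1, underline (N : Set A), underline Set.univ} : Set (MonoidAlgebra ℤ A)),
      mapDomainAlgHom ℤ ℤ invMonoidHom p = p := by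
    simp only [Set.mem_insert_iff, Set.mem_singleton_iff]
    rintro p (rfl | rfl | rfl) <;>
      simp only [map_one, mapDomainAlgHom_inv_underline, inv_coe_set, Set.inv_univ]
  have hσt : mapDomainAlgHom ℤ ℤ invMonoidHom '' {underline D, underline Set.univ}
      = {underline D⁻¹, underline (Set.univ : Set A)} := by
    rw [Set.image_pair, mapDomainAlgHom_inv_underline, mapDomainAlgHom_inv_underline, Set.inv_univ]
  exact mul_mem_span_image_union_image_mul _ _ hβ (single_mul_mapDomainAlgHom ι hbconj)
    (mul_mem_span_one_subgroup_univ N) (mul_mem_span_underline_univ N D μ hμ) hfix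
    (hσt ▸ mul_inv_mem_span_one_subgroup_univ N D l1 l2 hdds) hu hv

/-- for a divisible difference set `D` (with `m, n > 1`, satisfying the
intersection condition) relative to a proper nontrivial subgroup `N` of a finite
abelian group `A`, the sets `{1}, X1 = N\{1}, X2 = A\N, X3 = Db, X4 = (A\D)b` in the
generalized dihedral group `G = Dih(A)` are inverse-closed and the `ℤ`-span of their
`underline`s in `MonoidAlgebra ℤ G` is closed under multiplication (an S-ring of
rank 5 over `G`). -/
theorem dihedral_sring_of_dds
    (A : Type*) [CommGroup A] [Fintype A] [DecidableEq A]
    (G : Type*) [Group G] [Fintype G]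
    (ι : A →* G) (hinj : Function.Injective ι)
    (b : G) (hb2 : b * b = 1) (hb1 : b ≠ 1)
    (hbconj : ∀ a : A, b * ι a * b⁻¹ = ι a⁻¹)
    (hbnot : b ∉ Set.range ι)
    (hcardG : Fintype.card G = 2 * Fintype.card A)
    (hdecomp : ∀ g : G, (∃ a, g = ι a) ∨ (∃ a, g = ι a * b))
    (N : Subgroup A) (hNtop : N ≠ ⊤) (hNbot : N ≠ ⊥)
    (D : Set A) (hDne : D.Nonempty)
    (m n k l1 l2 : ℕ) (hm : N.index = m) (hn : Nat.card N = n)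
    (hk : Nat.card D = k) (hm1 : 1 < m) (hn1 : 1 < n)
    (hdds : ∀ g : A, g ≠ 1 →
      Nat.card {pr : A × A // pr.1 ∈ D ∧ pr.2 ∈ D ∧ pr.1 * pr.2⁻¹ = g}
        = if g ∈ N then l1 else l2)
    (hic : ∃ μ : ℕ, ∀ g : A, Nat.card {x : A // x ∈ D ∧ x * g⁻¹ ∈ N} = μ)
    (X1 X2 X3 X4 : Set G)
    (hX1 : X1 = ι '' ((N : Set A) \ {1}))
    (hX2 : X2 = ι '' ((Set.univ : Set A) \ (N : Set A)))
    (hX3 : X3 = (fun a => ι a * b) '' D)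
    (hX4 : X4 = (fun a => ι a * b) '' ((Set.univ : Set A) \ D)) :
    ({(1 : G)} : Set G)⁻¹ = {(1 : G)} ∧ X1⁻¹ = X1 ∧ X2⁻¹ = X2 ∧ X3⁻¹ = X3 ∧ X4⁻¹ = X4 ∧
    (∀ u v : MonoidAlgebra ℤ G,
      u ∈ Submodule.span ℤ ({underline {(1 : G)}, underline X1, underline X2,
        underline X3, underline X4} : Set (MonoidAlgebra ℤ G)) →
      v ∈ Submodule.span ℤ ({underline {(1 : G)}, underline X1, underline X2,
        underline X3, underline X4} : Set (MonoidAlgebra ℤ G)) →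
      u * v ∈ Submodule.span ℤ ({underline {(1 : G)}, underline X1, underline X2,
        underline X3, underline X4} : Set (MonoidAlgebra ℤ G))) :=
  dihedral_sring_of_dds_general A G ι hinj b hb2 hbconj N D l1 l2 hdds hic X1 X2 X3 X4 hX1 hX2 hX3
    hX4
end

section
/- Let m, n, k be natural numbers with m ≥ 2, n ≥ 2 and 1 ≤ k ≤ mn−1. Then the conjunction of (as rational numbers) 1/k + 1/(mn−k) = 1/(n−1) − 1/n and (k = 2n or mn − k = 2n) holds if and only if m = 4, n = 2 and k = 4. -/
/-! If `k = 2n` (the case `mn - k = 2n` is symmetric), then writing `b = mn - k` the equation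
`1/(2n) + 1/b = 1/(n(n-1))` becomes `b (3 - n) = 2n(n - 1)`. The right side is positive, so
`n < 3`, whence `n = 2`, `b = 4`, `k = 4` and `m = 4`. -/

lemma eq_two_and_eq_four_of_one_div_two_mul_add_one_div (n b : ℕ) (hn : 2 ≤ n) (hb : b ≠ 0)
    (h : 1 / (2 * n : ℚ) + 1 / (b : ℚ) = 1 / ((n : ℚ) - 1) - 1 / (n : ℚ)) :
    n = 2 ∧ b = 4 := by
  have hnq : (2 : ℚ) ≤ n := by exact_mod_cast hn
  have hbq : (0 : ℚ) < b := by positivity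
  have key : (b : ℚ) * (3 - n) = 2 * n * (n - 1) := by
    have : (n : ℚ) - 1 ≠ 0 := by linarith
    field_simp at h
    linear_combination -h
  have hn2 : n = 2 := by
    have : (n : ℚ) < 3 := by nlinarith
    have : n < 3 := by exact_mod_cast this
    omega
  subst hn2
  refine ⟨rfl, ?_⟩
  exact_mod_cast (by linear_combination key : (b : ℚ) = 4)

theorem rds_424_criterion_general (m n k : ℕ) (hn : 2 ≤ n)
    (hk1 : 1 ≤ k) (hk2 : k ≤ m * n - 1) :
    ((1 / (k : ℚ) + 1 / ((m * n - k : ℕ) : ℚ)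
        = 1 / ((n : ℚ) - 1) - 1 / (n : ℚ)) ∧
      (k = 2 * n ∨ m * n - k = 2 * n)) ↔ (m = 4 ∧ n = 2 ∧ k = 4) := by
  constructor
  · rintro ⟨heq, hcase⟩
    obtain ⟨rfl, hk, hb⟩ : n = 2 ∧ k = 4 ∧ m * n - k = 4 := by
      rcases hcase with h | h
      · rw [h, Nat.cast_mul, Nat.cast_two] at heq
        have := eq_two_and_eq_four_of_one_div_two_mul_add_one_div n _ hn (by omega) heq
        omega
      · rw [h, Nat.cast_mul, Nat.cast_two, add_comm] at heq
        have := eq_two_and_eq_four_of_one_div_two_mul_add_one_div n k hn (by omega) heq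
        omega
    omega
  · rintro ⟨rfl, rfl, rfl⟩
    norm_num

/-- for natural numbers `m ≥ 2`, `n ≥ 2`, `1 ≤ k ≤ mn − 1`, the
conjunction of `1/k + 1/(mn−k) = 1/(n−1) − 1/n` (in `ℚ`) and
(`k = 2n` or `mn − k = 2n`) holds iff `(m, n, k) = (4, 2, 4)`. -/
theorem rds_424_criterion (m n k : ℕ) (hm : 2 ≤ m) (hn : 2 ≤ n)
    (hk1 : 1 ≤ k) (hk2 : k ≤ m * n - 1) :
    ((1 / (k : ℚ) + 1 / ((m * n - k : ℕ) : ℚ)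
        = 1 / ((n : ℚ) - 1) - 1 / (n : ℚ)) ∧
      (k = 2 * n ∨ m * n - k = 2 * n)) ↔ (m = 4 ∧ n = 2 ∧ k = 4) :=
  rds_424_criterion_general m n k hn hk1 hk2
end
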